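/- arXiv:1804.08155 — 4 statements merged into one kernel-verified Lean document; each statement's English description precedes it below -/
import Mathlib

section
/- If X is a proper k-dimensional simplicial complex (i.e., ker U_i = {0} for all −1 ≤ i ≤ k−1), then C^k decomposes as a direct sum C^k = V^k ⊕ V^{k−1} ⊕ ⋯ ⊕ V^{−1}, where V^i = U^{k−i} H^i and H^i = ker D_i (with H^{−1} = C^{−1} = ℝ). Equivalently, every f ∈ C^k has a unique representation f = Σ_{i=−1}^{k} U^{k−i} h_i with h_i ∈ H^i. -/
open Finset

noncomputable section

/-- A pure `d`-dimensional weighted simplicial complex on a finite vertex set `V`: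
a nonempty collection of top faces, each of cardinality `d+1`, together with a
probability distribution on the top faces which is positive on them.  (Faces of
cardinality `j` correspond to faces of dimension `j-1`, i.e. of level `j-1`, in
the paper's indexing; the empty face has level `-1`.) -/
structure WSC (V : Type) [DecidableEq V] [Fintype V] (d : ℕ) : Type where
  top : Finset (Finset V)
  top_nonempty : top.Nonempty
  pure : ∀ s ∈ top, s.card = d + 1
  w : Finset V → ℝ
  w_pos : ∀ s ∈ top, 0 < w s
  w_supp : ∀ s, s ∉ top → w s = 0
  w_sum : ∑ s ∈ top, w s = 1

namespace WSC

variable {V : Type} [DecidableEq V] [Fintype V] {d : ℕ} (X : WSC V d)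

/-- The faces of cardinality `j`, i.e. the set `X(j-1)` in the paper's indexing. -/
def faces (j : ℕ) : Finset (Finset V) :=
  (Finset.univ : Finset V).powerset.filter (fun t => t.card = j ∧ ∃ s ∈ X.top, t ⊆ s)

/-- All faces of the complex. -/
def allFaces : Finset (Finset V) :=
  (Finset.univ : Finset V).powerset.filter (fun t => ∃ s ∈ X.top, t ⊆ s)

/-- The induced distribution `Dist_{j-1}` on the faces of cardinality `j`:
choose a top face according to `w` and then a uniformly random subset of
cardinality `j` of it. -/
def dist (j : ℕ) (t : Finset V) : ℝ :=
  (∑ s ∈ X.top.filter (fun s => t ⊆ s), X.w s) / (d + 1).choose j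

/-- The weighted inner product on the space `C^{j-1}` of functions on the faces
of cardinality `j`. -/
def ip (j : ℕ) (f g : Finset V → ℝ) : ℝ :=
  ∑ t ∈ X.faces j, X.dist j t * f t * g t

/-- The up (averaging) operator `U_{j-1}` sending functions on cardinality-`j`
faces to functions on cardinality-`(j+1)` faces. -/
def up (_X : WSC V d) (j : ℕ) (g : Finset V → ℝ) : Finset V → ℝ :=
  fun s => (∑ x ∈ s, g (s.erase x)) / ((j : ℝ) + 1)

/-- The down (averaging) operator `D_{j-1}` sending functions on cardinality-`j`
faces to functions on cardinality-`(j-1)` faces. -/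
def down (j : ℕ) (f : Finset V → ℝ) : Finset V → ℝ :=
  fun t => (∑ s ∈ (X.faces j).filter (fun s => t ⊆ s), X.dist j s * f s) /
    ((j : ℝ) * X.dist (j - 1) t)

/-- `m`-fold iterate of the up operator, starting from cardinality `j`. -/
def upIter (X : WSC V d) (j : ℕ) : ℕ → (Finset V → ℝ) → (Finset V → ℝ)
  | 0, g => g
  | (m+1), g => X.up (j + m) (upIter X j m g)

/-- `ys s` is the indicator function of containing the face `s`. -/
def ys (s t : Finset V) : ℝ := if s ⊆ t then 1 else 0

/-- `ys s` viewed as a function on the top faces `X(d)` (zero elsewhere). -/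
def ysRes (s : Finset V) : Finset V → ℝ :=
  fun r => if r ∈ X.faces (d + 1) ∧ s ⊆ r then 1 else 0

/-- `X` is proper: all the up operators `U_i`, `-1 ≤ i ≤ d-1`, have trivial
kernel (as operators on functions supported on the faces). -/
def Proper : Prop :=
  ∀ j, j ≤ d → ∀ g : Finset V → ℝ,
    (∀ t, t ∉ X.faces j → g t = 0) →
    (∀ s ∈ X.faces (j + 1), X.up j g s = 0) →
    ∀ t, g t = 0

/-- `h` is a harmonic function at cardinality `j`, i.e. an element of
`H^{j-1} = ker D_{j-1}` (for `j = 0` this is all of `C^{-1}`). -/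
def Harmonic (j : ℕ) (h : Finset V → ℝ) : Prop :=
  (∀ t, t ∉ X.faces j → h t = 0) ∧
  (1 ≤ j → ∀ t ∈ X.faces (j - 1), X.down j h t = 0)

/-- The non-lazy upper random walk `M⁺_{j-1}` on functions on cardinality-`j`
faces: go up to a random cardinality-`(j+1)` face and back down to a distinct
cardinality-`j` face. -/
def Mplus (j : ℕ) (f : Finset V → ℝ) : Finset V → ℝ :=
  fun t => ∑ s ∈ (X.faces (j + 1)).filter (fun s => t ⊆ s),
    (X.dist (j + 1) s / (((j : ℝ) + 1) * X.dist j t)) *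
      ((∑ x ∈ t, f (s.erase x)) / (j : ℝ))

/-- The lower random walk `U_{j-2} D_{j-1}` on functions on cardinality-`j` faces. -/
def lower (j : ℕ) (f : Finset V → ℝ) : Finset V → ℝ :=
  fun t => X.up (j - 1) (X.down j f) t

/-- `X` is a `γ`-high-dimensional expander: `‖M⁺_j - U_{j-1} D_j‖ ≤ γ` for all
paper levels `0 ≤ j ≤ d-1`, where the operator norm is with respect to the
weighted `L²` structure, expressed via quadratic forms. -/
def IsHDX (γ : ℝ) : Prop :=
  ∀ j, j + 1 ≤ d → ∀ f : Finset V → ℝ,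
    X.ip (j + 1) (fun t => X.Mplus (j + 1) f t - X.lower (j + 1) f t)
      (fun t => X.Mplus (j + 1) f t - X.lower (j + 1) f t)
    ≤ γ ^ 2 * X.ip (j + 1) f f

/-- The probability that a random cardinality-`m` face contains `r`. -/
def distAbove (m : ℕ) (r : Finset V) : ℝ :=
  ∑ s ∈ (X.faces m).filter (fun s => r ⊆ s), X.dist m s

/-- Expectation of a vertex function of the link of `r` under the link's vertex
distribution. -/
def linkEv (r : Finset V) (f : V → ℝ) : ℝ :=
  ∑ s ∈ (X.faces (r.card + 1)).filter (fun s => r ⊆ s),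
    (X.dist (r.card + 1) s / X.distAbove (r.card + 1) r) * ∑ x ∈ s \ r, f x

/-- Expectation of `f(x) · g(y)` over a uniformly oriented random edge `(x,y)`
of the underlying graph of the link of `r`, i.e. the quadratic form
`⟨f, A_r g⟩` of the link's adjacency operator. -/
def linkEe (r : Finset V) (f g : V → ℝ) : ℝ :=
  ∑ s ∈ (X.faces (r.card + 2)).filter (fun s => r ⊆ s),
    (X.dist (r.card + 2) s / X.distAbove (r.card + 2) r) *
      ((∑ x ∈ s \ r, ∑ y ∈ (s \ r).erase x, f x * g y) / 2)

/-- The two-sided spectral bound `λ(A_r) ≤ γ` for the underlying graph of the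
link of `r`, in its equivalent quadratic-form formulation
`|⟨f, A_r g⟩ - E[f]·E[g]| ≤ γ‖f‖‖g‖`. -/
def LinkBound (r : Finset V) (γ : ℝ) : Prop :=
  ∀ f g : V → ℝ,
    |X.linkEe r f g - X.linkEv r f * X.linkEv r g| ≤
      γ * Real.sqrt (X.linkEv r (fun x => f x ^ 2)) *
        Real.sqrt (X.linkEv r (fun x => g x ^ 2))

/-- `X` is a `γ`-two-sided link expander: every link (with a nonempty underlying
graph) satisfies `λ(A_r) ≤ γ`. -/
def TwoSidedLinkExpander (γ : ℝ) : Prop :=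
  ∀ r ∈ X.allFaces, r.card + 2 ≤ d + 1 → X.LinkBound r γ

end WSC

section Aux

namespace WSCAux

open WSC Finset

variable {V : Type} [DecidableEq V] [Fintype V] {k : ℕ} (X : WSC V k)

lemma mem_faces {j : ℕ} {t : Finset V} :
    t ∈ X.faces j ↔ t.card = j ∧ ∃ s ∈ X.top, t ⊆ s := by
  simp [WSC.faces]

lemma faces_card_le {j : ℕ} {t : Finset V} (ht : t ∈ X.faces j) : j ≤ k + 1 := by
  obtain ⟨hc, s, hs, hts⟩ := (mem_faces X).mp ht
  have h2 := Finset.card_le_card hts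
  rw [hc, X.pure s hs] at h2
  exact h2

lemma erase_mem_faces {j : ℕ} {s : Finset V} (hs : s ∈ X.faces (j+1)) {x : V} (hx : x ∈ s) :
    s.erase x ∈ X.faces j := by
  obtain ⟨hc, s', hs', hss'⟩ := (mem_faces X).mp hs
  exact (mem_faces X).mpr ⟨by rw [Finset.card_erase_of_mem hx, hc]; omega, s', hs',
    (Finset.erase_subset x s).trans hss'⟩

lemma w_nonneg (s : Finset V) : 0 ≤ X.w s := by
  by_cases hs : s ∈ X.top
  · exact (X.w_pos s hs).le
  · rw [X.w_supp s hs]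

lemma dist_nonneg (j : ℕ) (t : Finset V) : 0 ≤ X.dist j t := by
  unfold WSC.dist
  apply div_nonneg
  · exact Finset.sum_nonneg fun s _ => w_nonneg X s
  · positivity

lemma dist_pos {j : ℕ} {t : Finset V} (ht : t ∈ X.faces j) : 0 < X.dist j t := by
  obtain ⟨hc, s₀, hs₀, hts₀⟩ := (mem_faces X).mp ht
  unfold WSC.dist
  apply div_pos
  · have hmem : s₀ ∈ X.top.filter (fun s => t ⊆ s) := Finset.mem_filter.mpr ⟨hs₀, hts₀⟩
    exact lt_of_lt_of_le (X.w_pos s₀ hs₀)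
      (Finset.single_le_sum (fun s _ => w_nonneg X s) hmem)
  · have hj : j ≤ k + 1 := faces_card_le X ht
    exact_mod_cast Nat.choose_pos hj

lemma filter_subset_eq_image {j : ℕ} {s : Finset V} (hs : s ∈ X.faces (j+1)) :
    (X.faces j).filter (fun t => t ⊆ s) = s.image s.erase := by
  obtain ⟨hc, s', hs', hss'⟩ := (mem_faces X).mp hs
  ext t
  simp only [Finset.mem_filter, Finset.mem_image, mem_faces X]
  constructor
  · rintro ⟨⟨htc, _⟩, hts⟩
    have hcd : (s \ t).card = 1 := by rw [Finset.card_sdiff_of_subset hts, hc, htc]; omega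
    obtain ⟨x, hx⟩ := Finset.card_eq_one.mp hcd
    have hxmem : x ∈ s \ t := hx ▸ Finset.mem_singleton_self x
    have hxs : x ∈ s := (Finset.mem_sdiff.mp hxmem).1
    have hxt : x ∉ t := (Finset.mem_sdiff.mp hxmem).2
    refine ⟨x, hxs, ?_⟩
    refine (Finset.eq_of_subset_of_card_le (Finset.subset_erase.mpr ⟨hts, hxt⟩) ?_).symm
    rw [Finset.card_erase_of_mem hxs, hc, htc]
    omega
  · rintro ⟨x, hxs, rfl⟩
    exact ⟨⟨by rw [Finset.card_erase_of_mem hxs, hc]; omega, s', hs',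
      (Finset.erase_subset x s).trans hss'⟩, Finset.erase_subset x s⟩

lemma sum_filter_swap {α β M : Type*} [AddCommMonoid M]
    (A : Finset α) (B : Finset β) (p : α → β → Prop) [∀ a b, Decidable (p a b)]
    (F : α → β → M) :
    ∑ a ∈ A, ∑ b ∈ B.filter (fun b => p a b), F a b
      = ∑ b ∈ B, ∑ a ∈ A.filter (fun a => p a b), F a b := by
  simp only [Finset.sum_filter]
  exact Finset.sum_comm

lemma adjoint (j : ℕ) (g f : Finset V → ℝ) :
    X.ip (j+1) (X.up j g) f = ∑ t ∈ X.faces j, X.dist j t * g t * X.down (j+1) f t := by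
  have hc : ((j:ℝ) + 1) ≠ 0 := by positivity
  have core : ∑ s ∈ X.faces (j+1), ∑ x ∈ s, X.dist (j+1) s * f s * g (s.erase x)
      = ∑ t ∈ X.faces j, g t *
          ∑ s ∈ (X.faces (j+1)).filter (fun s => t ⊆ s), X.dist (j+1) s * f s := by
    symm
    calc ∑ t ∈ X.faces j, g t *
          ∑ s ∈ (X.faces (j+1)).filter (fun s => t ⊆ s), X.dist (j+1) s * f s
        = ∑ t ∈ X.faces j, ∑ s ∈ (X.faces (j+1)).filter (fun s => t ⊆ s),
            g t * (X.dist (j+1) s * f s) := by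
          exact Finset.sum_congr rfl fun t _ => Finset.mul_sum _ _ _
      _ = ∑ s ∈ X.faces (j+1), ∑ t ∈ (X.faces j).filter (fun t => t ⊆ s),
            g t * (X.dist (j+1) s * f s) :=
          sum_filter_swap (X.faces j) (X.faces (j+1)) (fun t s => t ⊆ s) _
      _ = ∑ s ∈ X.faces (j+1), ∑ x ∈ s, X.dist (j+1) s * f s * g (s.erase x) := by
          refine Finset.sum_congr rfl fun s hs => ?_
          rw [filter_subset_eq_image X hs,
            Finset.sum_image (fun x hx y hy hxy => s.erase_injOn hx hy hxy)]
          exact Finset.sum_congr rfl fun x _ => by ring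
  calc X.ip (j+1) (X.up j g) f
      = (∑ s ∈ X.faces (j+1), ∑ x ∈ s, X.dist (j+1) s * f s * g (s.erase x)) / ((j:ℝ)+1) := by
        unfold WSC.ip WSC.up
        rw [Finset.sum_div]
        refine Finset.sum_congr rfl fun s _ => ?_
        rw [eq_div_iff hc, ← Finset.mul_sum]
        field_simp
    _ = (∑ t ∈ X.faces j, g t *
          ∑ s ∈ (X.faces (j+1)).filter (fun s => t ⊆ s), X.dist (j+1) s * f s) / ((j:ℝ)+1) := by
        rw [core]
    _ = ∑ t ∈ X.faces j, X.dist j t * g t * X.down (j+1) f t := by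
        rw [Finset.sum_div]
        refine Finset.sum_congr rfl fun t ht => ?_
        have hd : X.dist j t ≠ 0 := (dist_pos X ht).ne'
        unfold WSC.down
        simp only [Nat.add_sub_cancel]
        push_cast
        field_simp

lemma ip_self_eq_zero {j : ℕ} {u : Finset V → ℝ} (h : X.ip j u u = 0) :
    ∀ s ∈ X.faces j, u s = 0 := by
  intro s hs
  have hterm : ∀ t ∈ X.faces j, 0 ≤ X.dist j t * u t * u t := by
    intro t ht
    have h1 := dist_pos X ht
    nlinarith [sq_nonneg (u t)]
  have h2 := (Finset.sum_eq_zero_iff_of_nonneg hterm).mp h s hs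
  have hd := dist_pos X hs
  have h3 : X.dist j s * (u s * u s) = 0 := by rw [← mul_assoc]; exact h2
  rcases mul_eq_zero.mp h3 with h' | h'
  · exact absurd h' hd.ne'
  · exact mul_self_eq_zero.mp h'

end WSCAux

end Aux
namespace WSCAux

open WSC Finset

variable {V : Type} [DecidableEq V] [Fintype V] {k : ℕ} (X : WSC V k)

lemma up_add (j : ℕ) (a b : Finset V → ℝ) (s : Finset V) :
    X.up j (fun u => a u + b u) s = X.up j a s + X.up j b s := by
  unfold WSC.up
  rw [Finset.sum_add_distrib, add_div]

lemma up_sub (j : ℕ) (a b : Finset V → ℝ) (s : Finset V) :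
    X.up j (fun u => a u - b u) s = X.up j a s - X.up j b s := by
  unfold WSC.up
  rw [Finset.sum_sub_distrib, sub_div]

lemma up_smul (j : ℕ) (c : ℝ) (a : Finset V → ℝ) (s : Finset V) :
    X.up j (fun u => c * a u) s = c * X.up j a s := by
  unfold WSC.up
  rw [← Finset.mul_sum, mul_div_assoc]

lemma up_sum {j : ℕ} {ι : Type*} (r : Finset ι) (F : ι → (Finset V → ℝ)) (s : Finset V) :
    X.up j (fun u => ∑ i ∈ r, F i u) s = ∑ i ∈ r, X.up j (F i) s := by
  unfold WSC.up
  rw [← Finset.sum_div, Finset.sum_comm]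

lemma up_congr {j : ℕ} {a b : Finset V → ℝ} (h : ∀ t ∈ X.faces j, a t = b t)
    {s : Finset V} (hs : s ∈ X.faces (j+1)) : X.up j a s = X.up j b s := by
  unfold WSC.up
  congr 1
  refine Finset.sum_congr rfl fun x hx => ?_
  rw [h _ (erase_mem_faces X hs hx)]

lemma down_add (j : ℕ) (a b : Finset V → ℝ) (t : Finset V) :
    X.down j (fun u => a u + b u) t = X.down j a t + X.down j b t := by
  unfold WSC.down
  rw [← add_div]
  congr 1
  rw [← Finset.sum_add_distrib]
  exact Finset.sum_congr rfl fun s _ => by ring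

lemma down_sub (j : ℕ) (a b : Finset V → ℝ) (t : Finset V) :
    X.down j (fun u => a u - b u) t = X.down j a t - X.down j b t := by
  unfold WSC.down
  rw [← sub_div]
  congr 1
  rw [← Finset.sum_sub_distrib]
  exact Finset.sum_congr rfl fun s _ => by ring

lemma down_smul (j : ℕ) (c : ℝ) (a : Finset V → ℝ) (t : Finset V) :
    X.down j (fun u => c * a u) t = c * X.down j a t := by
  unfold WSC.down
  rw [← mul_div_assoc]
  congr 1
  rw [Finset.mul_sum]
  exact Finset.sum_congr rfl fun s _ => by ring

lemma down_congr {j : ℕ} {a b : Finset V → ℝ} (h : ∀ s ∈ X.faces j, a s = b s)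
    (t : Finset V) : X.down j a t = X.down j b t := by
  unfold WSC.down
  congr 1
  refine Finset.sum_congr rfl fun s hs => ?_
  rw [h s (Finset.mem_filter.mp hs).1]

lemma harmonic_sub {j : ℕ} {a b : Finset V → ℝ} (ha : X.Harmonic j a) (hb : X.Harmonic j b) :
    X.Harmonic j (fun u => a u - b u) := by
  constructor
  · intro t ht
    show a t - b t = 0
    rw [ha.1 t ht, hb.1 t ht, sub_zero]
  · intro hj t ht
    rw [down_sub, ha.2 hj t ht, hb.2 hj t ht, sub_zero]

/-- Functions supported on the faces of cardinality `j`, as a submodule. -/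
def Csub (j : ℕ) : Submodule ℝ (Finset V → ℝ) where
  carrier := {g | ∀ t, t ∉ X.faces j → g t = 0}
  add_mem' := by
    intro a b ha hb t ht
    show a t + b t = 0
    rw [ha t ht, hb t ht, add_zero]
  zero_mem' := fun t _ => rfl
  smul_mem' := by
    intro c g hg t ht
    show c * g t = 0
    rw [hg t ht, mul_zero]

lemma mem_Csub {j : ℕ} {g : Finset V → ℝ} :
    g ∈ Csub X j ↔ ∀ t, t ∉ X.faces j → g t = 0 := Iff.rfl

/-- The operator `D_{j} U_{j-1}` restricted to `C^{j-1}` (cardinality `j`). -/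
def Tmap (j : ℕ) : Csub X j →ₗ[ℝ] Csub X j where
  toFun g := ⟨fun t => if t ∈ X.faces j then X.down (j+1) (X.up j (g : Finset V → ℝ)) t else 0,
    fun t ht => if_neg ht⟩
  map_add' a b := by
    apply Subtype.ext
    funext t
    show (if t ∈ X.faces j then X.down (j+1) (X.up j ((a : Finset V → ℝ) + b)) t else 0) = _
    by_cases ht : t ∈ X.faces j
    · have e1 : X.up j ((a : Finset V → ℝ) + (b : Finset V → ℝ))
          = fun s => X.up j (a : Finset V → ℝ) s + X.up j (b : Finset V → ℝ) s :=
        funext fun s => up_add X j _ _ s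
      simp only [ht, if_true, e1]
      rw [down_add]
      simp [ht]
    · simp [ht]
  map_smul' c a := by
    apply Subtype.ext
    funext t
    show (if t ∈ X.faces j then X.down (j+1) (X.up j (c • (a : Finset V → ℝ))) t else 0) = _
    by_cases ht : t ∈ X.faces j
    · have e1 : X.up j (c • (a : Finset V → ℝ))
          = fun s => c * X.up j (a : Finset V → ℝ) s :=
        funext fun s => up_smul X j c _ s
      simp only [ht, if_true, e1]
      rw [show X.down (j+1) (fun s => c * X.up j (a : Finset V → ℝ) s) t
          = c * X.down (j+1) (X.up j (a : Finset V → ℝ)) t from down_smul X (j+1) c _ t]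
      simp [ht]
    · simp [ht]

lemma Tmap_inj (hX : X.Proper) {j : ℕ} (hj : j ≤ k) : Function.Injective (Tmap X j) := by
  rw [← LinearMap.ker_eq_bot, LinearMap.ker_eq_bot']
  intro g hg
  have hdown : ∀ t ∈ X.faces j, X.down (j+1) (X.up j (g : Finset V → ℝ)) t = 0 := by
    intro t ht
    have h1 := congrFun (congrArg (Subtype.val) hg) t
    simpa [Tmap, ht] using h1
  have hip : X.ip (j+1) (X.up j (g : Finset V → ℝ)) (X.up j (g : Finset V → ℝ)) = 0 := by
    rw [adjoint]
    exact Finset.sum_eq_zero fun t ht => by rw [hdown t ht, mul_zero]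
  have hup0 : ∀ s ∈ X.faces (j+1), X.up j (g : Finset V → ℝ) s = 0 := ip_self_eq_zero X hip
  have hzero : ∀ t, (g : Finset V → ℝ) t = 0 := hX j hj _ g.2 hup0
  exact Subtype.ext (funext hzero)

lemma step (hX : X.Proper) {j : ℕ} (hj : j ≤ k) (f : Finset V → ℝ) :
    ∃ g : Finset V → ℝ, (∀ t, t ∉ X.faces j → g t = 0) ∧
      ∀ t ∈ X.faces j, X.down (j+1) (X.up j g) t = X.down (j+1) f t := by
  have hsurj := LinearMap.injective_iff_surjective.mp (Tmap_inj X hX hj)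
  obtain ⟨g, hg⟩ := hsurj ⟨fun t => if t ∈ X.faces j then X.down (j+1) f t else 0,
    fun t ht => if_neg ht⟩
  refine ⟨(g : Finset V → ℝ), g.2, fun t ht => ?_⟩
  have h1 := congrFun (congrArg (Subtype.val) hg) t
  simpa [Tmap, ht] using h1

end WSCAux
namespace WSCAux

open WSC Finset

variable {V : Type} [DecidableEq V] [Fintype V] {k : ℕ} (X : WSC V k)

lemma sum_shift (j : ℕ) (h : ℕ → (Finset V → ℝ)) (t : Finset V) :
    ∑ i ∈ Finset.range (j+2), X.upIter i (j+1-i) (h i) t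
      = X.up j (fun u => ∑ i ∈ Finset.range (j+1), X.upIter i (j-i) (h i) u) t
        + h (j+1) t := by
  rw [Finset.sum_range_succ]
  congr 1
  · rw [up_sum]
    refine Finset.sum_congr rfl fun i hi => ?_
    have hij : i ≤ j := Nat.lt_succ_iff.mp (Finset.mem_range.mp hi)
    have h1 : j + 1 - i = (j - i) + 1 := by omega
    rw [h1]
    show X.up (i + (j-i)) (X.upIter i (j-i) (h i)) t = X.up j (X.upIter i (j-i) (h i)) t
    rw [Nat.add_sub_cancel' hij]
  · rw [Nat.sub_self]
    simp [WSC.upIter]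

lemma exists_decomp (hX : X.Proper) :
    ∀ j, j ≤ k + 1 → ∀ f : Finset V → ℝ,
    ∃ h : ℕ → (Finset V → ℝ), (∀ i, i ≤ j → X.Harmonic i (h i)) ∧
      ∀ t ∈ X.faces j, f t = ∑ i ∈ Finset.range (j+1), X.upIter i (j - i) (h i) t := by
  intro j
  induction j with
  | zero =>
    intro _ f
    refine ⟨fun _ => fun t => if t ∈ X.faces 0 then f t else 0, ?_, ?_⟩
    · intro i hi
      interval_cases i
      constructor
      · intro t ht
        exact if_neg ht
      · intro h10
        exact absurd h10 (by omega)
    · intro t ht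
      rw [Finset.sum_range_one]
      show f t = (if t ∈ X.faces 0 then f t else 0)
      rw [if_pos ht]
  | succ j ih =>
    intro hj f
    have hjk : j ≤ k := by omega
    obtain ⟨g, hgsupp, hgdown⟩ := step X hX hjk f
    obtain ⟨hh, hhharm, hhsum⟩ := ih (by omega) g
    set htop : Finset V → ℝ :=
      fun u => if u ∈ X.faces (j+1) then f u - X.up j g u else 0 with htop_def
    have htop_harm : X.Harmonic (j+1) htop := by
      constructor
      · intro t ht
        exact if_neg ht
      · intro _ t ht
        have e1 : X.down (j+1) htop t = X.down (j+1) (fun u => f u - X.up j g u) t := by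
          refine down_congr X (fun s hs => ?_) t
          exact if_pos hs
        rw [Nat.add_sub_cancel] at ht
        rw [e1, down_sub, hgdown t ht, sub_self]
    refine ⟨fun i => if i = j+1 then htop else hh i, ?_, ?_⟩
    · intro i hi
      by_cases hij : i = j + 1
      · subst hij
        simpa using htop_harm
      · have : i ≤ j := by omega
        simpa [hij] using hhharm i this
    · intro t ht
      have hsplit := sum_shift X j (fun i => if i = j+1 then htop else hh i) t
      rw [hsplit]
      have e2 : X.up j (fun u => ∑ i ∈ Finset.range (j+1),
          X.upIter i (j-i) (if i = j+1 then htop else hh i) u) t = X.up j g t := by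
        refine up_congr X (fun u hu => ?_) ht
        have e3 : ∀ i ∈ Finset.range (j+1),
            X.upIter i (j-i) (if i = j+1 then htop else hh i) u
              = X.upIter i (j-i) (hh i) u := by
          intro i hi
          have : i ≠ j + 1 := by have := Finset.mem_range.mp hi; omega
          rw [if_neg this]
        rw [Finset.sum_congr rfl e3, ← hhsum u hu]
      rw [e2, if_pos rfl]
      show f t = X.up j g t + (if t ∈ X.faces (j+1) then f t - X.up j g t else 0)
      rw [if_pos ht]
      ring

lemma zero_decomp (hX : X.Proper) :
    ∀ j, j ≤ k + 1 → ∀ h : ℕ → (Finset V → ℝ),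
    (∀ i, i ≤ j → X.Harmonic i (h i)) →
    (∀ t ∈ X.faces j, ∑ i ∈ Finset.range (j+1), X.upIter i (j-i) (h i) t = 0) →
    ∀ i, i ≤ j → h i = 0 := by
  intro j
  induction j with
  | zero =>
    intro _ h hharm hsum i hi
    interval_cases i
    funext t
    by_cases ht : t ∈ X.faces 0
    · have := hsum t ht
      rw [Finset.sum_range_one] at this
      exact this
    · exact (hharm 0 le_rfl).1 t ht
  | succ j ih =>
    intro hj h hharm hsum
    have hjk : j ≤ k := by omega
    set G : Finset V → ℝ := fun u => ∑ i ∈ Finset.range (j+1), X.upIter i (j-i) (h i) u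
      with G_def
    set g : Finset V → ℝ := fun u => if u ∈ X.faces j then G u else 0 with g_def
    have hgsupp : ∀ t, t ∉ X.faces j → g t = 0 := fun t ht => if_neg ht
    have key : ∀ s ∈ X.faces (j+1), X.up j g s + h (j+1) s = 0 := by
      intro s hs
      have h1 := hsum s hs
      rw [sum_shift X j h s] at h1
      have e2 : X.up j G s = X.up j g s := by
        refine up_congr X (fun u hu => ?_) hs
        exact (if_pos hu).symm
      rw [e2] at h1
      exact h1
    have hip : X.ip (j+1) (X.up j g) (X.up j g) = 0 := by
      have h1 : X.ip (j+1) (X.up j g) (X.up j g)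
          = ∑ s ∈ X.faces (j+1), X.dist (j+1) s * X.up j g s * (X.up j g s + h (j+1) s)
            - X.ip (j+1) (X.up j g) (h (j+1)) := by
        unfold WSC.ip
        rw [← Finset.sum_sub_distrib]
        exact Finset.sum_congr rfl fun s _ => by ring
      have h2 : ∑ s ∈ X.faces (j+1),
          X.dist (j+1) s * X.up j g s * (X.up j g s + h (j+1) s) = 0 :=
        Finset.sum_eq_zero fun s hs => by rw [key s hs, mul_zero]
      have h3 : X.ip (j+1) (X.up j g) (h (j+1)) = 0 := by
        rw [adjoint]
        refine Finset.sum_eq_zero fun t ht => ?_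
        have h4 : X.down (j+1) (h (j+1)) t = 0 := by
          refine (hharm (j+1) le_rfl).2 (by omega) t ?_
          rw [Nat.add_sub_cancel]
          exact ht
        rw [h4, mul_zero]
      rw [h1, h2, h3, sub_zero]
    have hup0 : ∀ s ∈ X.faces (j+1), X.up j g s = 0 := ip_self_eq_zero X hip
    have hg0 : ∀ t, g t = 0 := hX j hjk g hgsupp hup0
    have hG0 : ∀ t ∈ X.faces j, G t = 0 := by
      intro t ht
      simpa [g_def, ht] using hg0 t
    have hrest := ih (by omega) h (fun i hi => hharm i (by omega)) hG0
    intro i hi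
    by_cases hij : i = j + 1
    · subst hij
      funext s
      by_cases hs : s ∈ X.faces (j+1)
      · have h5 := key s hs
        have h6 : X.up j g s = 0 := by
          unfold WSC.up
          rw [Finset.sum_eq_zero fun x _ => hg0 _, zero_div]
        rw [h6, zero_add] at h5
        exact h5
      · exact (hharm (j+1) le_rfl).1 s hs
    · exact hrest i (by omega)

lemma upIter_sub (i : ℕ) : ∀ (m : ℕ) (a b : Finset V → ℝ),
    X.upIter i m (fun u => a u - b u) = fun t => X.upIter i m a t - X.upIter i m b t := by
  intro m
  induction m with
  | zero => intro a b; rfl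
  | succ m ihm =>
    intro a b
    show X.up (i+m) (X.upIter i m fun u => a u - b u) = _
    rw [ihm a b]
    funext t
    show X.up (i+m) (fun u => X.upIter i m a u - X.upIter i m b u) t = _
    rw [up_sub]
    rfl

lemma uniq_decomp (hX : X.Proper) {j : ℕ} (hj : j ≤ k + 1) (h h' : ℕ → (Finset V → ℝ))
    (hharm : ∀ i, i ≤ j → X.Harmonic i (h i)) (hharm' : ∀ i, i ≤ j → X.Harmonic i (h' i))
    (hsum : ∀ t ∈ X.faces j,
      ∑ i ∈ Finset.range (j+1), X.upIter i (j-i) (h i) t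
        = ∑ i ∈ Finset.range (j+1), X.upIter i (j-i) (h' i) t) :
    ∀ i, i ≤ j → h i = h' i := by
  have hz := zero_decomp X hX j hj (fun i => fun u => h i u - h' i u)
    (fun i hi => harmonic_sub X (hharm i hi) (hharm' i hi))
    (by
      intro t ht
      have e1 : ∀ i ∈ Finset.range (j+1),
          X.upIter i (j-i) (fun u => h i u - h' i u) t
            = X.upIter i (j-i) (h i) t - X.upIter i (j-i) (h' i) t := by
        intro i _
        rw [upIter_sub]
      rw [Finset.sum_congr rfl e1, Finset.sum_sub_distrib, hsum t ht, sub_self])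
  intro i hi
  funext u
  have := congrFun (hz i hi) u
  simpa [sub_eq_zero] using this

end WSCAux
/-- (Decomposition theorem.)  If `X` is a proper
`k`-dimensional simplicial complex then `C^k = V^k ⊕ ⋯ ⊕ V^{-1}`: every
`f ∈ C^k` is uniquely a sum `f = ∑_{i=-1}^{k} U^{k-i} h_i` with `h_i ∈ H^i`
(`h_i` harmonic, i.e. `D_i h_i = 0`).  Here the index `j : Fin (k+2)` encodes
the level `i = j - 1` via cardinality. -/
theorem decomposition {V : Type} [DecidableEq V] [Fintype V] {k : ℕ}
    (X : WSC V k) (hX : X.Proper) (f : Finset V → ℝ) :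
    ∃! h : Fin (k + 2) → (Finset V → ℝ),
      (∀ j : Fin (k + 2), X.Harmonic j (h j)) ∧
      (∀ t ∈ X.faces (k + 1),
        f t = ∑ j : Fin (k + 2), X.upIter j (k + 1 - j) (h j) t) := by
  obtain ⟨hn, hnharm, hnsum⟩ := WSCAux.exists_decomp X hX (k+1) le_rfl f
  refine ⟨fun j : Fin (k+2) => hn (j : ℕ), ⟨?_, ?_⟩, ?_⟩
  · intro j
    exact hnharm (j : ℕ) (by omega)
  · intro t ht
    have e := Fin.sum_univ_eq_sum_range (fun i => X.upIter i (k+1-i) (hn i) t) (k+2)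
    rw [hnsum t ht, ← e]
  · rintro y ⟨yharm, ysum⟩
    set yn : ℕ → (Finset V → ℝ) := fun i => if hi : i < k + 2 then y ⟨i, hi⟩ else 0 with yn_def
    have hyn : ∀ j : Fin (k+2), yn (j : ℕ) = y j := by
      intro j
      simp only [yn_def, dif_pos j.isLt, Fin.eta]
    have yharm' : ∀ i, i ≤ k+1 → X.Harmonic i (yn i) := by
      intro i hi
      have hi2 : i < k + 2 := by omega
      have h1 := yharm ⟨i, hi2⟩
      have h2 := hyn ⟨i, hi2⟩
      rw [← h2] at h1
      exact h1
    have ysum' : ∀ t ∈ X.faces (k+1),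
        ∑ i ∈ Finset.range (k+1+1), X.upIter i (k+1-i) (hn i) t
          = ∑ i ∈ Finset.range (k+1+1), X.upIter i (k+1-i) (yn i) t := by
      intro t ht
      rw [← hnsum t ht, ysum t ht,
        ← Fin.sum_univ_eq_sum_range (fun i => X.upIter i (k+1-i) (yn i) t) (k+2)]
      exact Finset.sum_congr rfl fun j _ => by rw [hyn j]
    have huniq := WSCAux.uniq_decomp X hX le_rfl hn yn hnharm yharm'
      (fun t ht => ysum' t ht)
    funext j
    show y j = hn (j : ℕ)
    rw [← hyn j]
    exact (huniq (j : ℕ) (by omega)).symm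
end
end

section
/- If X is a proper k-dimensional simplicial complex, then every f ∈ C^k has a unique representation f = Σ_{s∈X} f̃(s) y_s where the coefficients satisfy the harmonicity condition: for all 0 ≤ i ≤ k and all t ∈ X(i−1), Σ_{s∈X(i), s⊃t} Dist_i(s) f̃(s) = 0. -/
open Finset

noncomputable section

namespace HarmAux

open WSC

variable {V : Type} [DecidableEq V] [Fintype V] {k : ℕ} (X : WSC V k)

lemma mem_faces_iff {j : ℕ} {t : Finset V} :
    t ∈ X.faces j ↔ t.card = j ∧ ∃ s ∈ X.top, t ⊆ s := by
  simp [WSC.faces]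

lemma mem_allFaces_iff {t : Finset V} :
    t ∈ X.allFaces ↔ ∃ s ∈ X.top, t ⊆ s := by
  simp [WSC.allFaces]

lemma faces_subset_allFaces {j : ℕ} {t : Finset V} (h : t ∈ X.faces j) :
    t ∈ X.allFaces := by
  rw [mem_faces_iff] at h; rw [mem_allFaces_iff]; exact h.2

lemma card_of_mem_faces {j : ℕ} {t : Finset V} (h : t ∈ X.faces j) : t.card = j :=
  ((mem_faces_iff X).mp h).1

lemma mem_faces_card {t : Finset V} (h : t ∈ X.allFaces) : t ∈ X.faces t.card := by
  rw [mem_allFaces_iff] at h; rw [mem_faces_iff]; exact ⟨rfl, h⟩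

lemma subset_mem_faces {j : ℕ} {s t : Finset V} (hs : s ∈ X.faces j) (hts : t ⊆ s) :
    t ∈ X.faces t.card := by
  rw [mem_faces_iff] at hs ⊢
  obtain ⟨-, r, hr, hsr⟩ := hs
  exact ⟨rfl, r, hr, hts.trans hsr⟩

lemma card_le_of_mem_allFaces {t : Finset V} (h : t ∈ X.allFaces) : t.card ≤ k + 1 := by
  rw [mem_allFaces_iff] at h
  obtain ⟨s, hs, hts⟩ := h
  calc t.card ≤ s.card := Finset.card_le_card hts
    _ = k + 1 := X.pure s hs

lemma erase_mem_faces {j : ℕ} {s : Finset V} (hs : s ∈ X.faces (j + 1)) {x : V}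
    (hx : x ∈ s) : s.erase x ∈ X.faces j := by
  have h := subset_mem_faces X hs (Finset.erase_subset x s)
  rwa [Finset.card_erase_of_mem hx, card_of_mem_faces X hs, Nat.add_sub_cancel] at h

lemma dist_pos {j : ℕ} {t : Finset V} (h : t ∈ X.faces j) : 0 < X.dist j t := by
  rw [mem_faces_iff] at h
  obtain ⟨hcard, s, hs, hts⟩ := h
  have hj : j ≤ k + 1 := by
    calc j = t.card := hcard.symm
      _ ≤ s.card := Finset.card_le_card hts
      _ = k + 1 := X.pure s hs
  have hchoose : 0 < ((k + 1).choose j : ℝ) := by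
    exact_mod_cast Nat.choose_pos hj
  apply div_pos _ hchoose
  apply Finset.sum_pos
  · intro r hr
    exact X.w_pos r (Finset.mem_of_mem_filter r hr)
  · exact ⟨s, Finset.mem_filter.mpr ⟨hs, hts⟩⟩

end HarmAux

namespace HarmAux2

open WSC HarmAux

variable {V : Type} [DecidableEq V] [Fintype V] {k : ℕ} (X : WSC V k)

/-- Guarded up operator. -/
def UU (j : ℕ) (g : Finset V → ℝ) : Finset V → ℝ :=
  fun s => if s ∈ X.faces (j + 1) then (∑ x ∈ s, g (s.erase x)) / ((j : ℝ) + 1) else 0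

/-- Guarded numerator of the down operator. -/
def NN (j : ℕ) (f : Finset V → ℝ) : Finset V → ℝ :=
  fun t => if t ∈ X.faces j then
    ∑ s ∈ (X.faces (j + 1)).filter (fun s => t ⊆ s), X.dist (j + 1) s * f s else 0

/-- `g` is supported on the faces of cardinality `j`. -/
def Supp (j : ℕ) (g : Finset V → ℝ) : Prop := ∀ t, t ∉ X.faces j → g t = 0

lemma supp_UU {j : ℕ} (g : Finset V → ℝ) : Supp X (j + 1) (UU X j g) := by
  intro t ht; simp [UU, ht]

lemma sum_erase_eq {j : ℕ} {s : Finset V} (hs : s.card = j + 1) (F : Finset V → ℝ) :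
    ∑ x ∈ s, F (s.erase x) = ∑ t ∈ s.powerset.filter (fun t => t.card = j), F t := by
  have himg : s.image s.erase = s.powerset.filter (fun t => t.card = j) := by
    ext t
    simp only [Finset.mem_image, Finset.mem_filter, Finset.mem_powerset]
    constructor
    · rintro ⟨x, hx, rfl⟩
      exact ⟨Finset.erase_subset x s, by rw [Finset.card_erase_of_mem hx, hs]; omega⟩
    · rintro ⟨hts, htc⟩
      have hne : (s \ t).Nonempty := by
        rw [← Finset.card_pos, Finset.card_sdiff_of_subset hts, hs, htc]; omega
      obtain ⟨x, hx⟩ := hne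
      rw [Finset.mem_sdiff] at hx
      refine ⟨x, hx.1, ?_⟩
      apply (Finset.eq_of_subset_of_card_le ?_ ?_).symm
      · intro y hy
        rw [Finset.mem_erase]
        exact ⟨fun h => hx.2 (h ▸ hy), hts hy⟩
      · rw [Finset.card_erase_of_mem hx.1, hs, htc]; omega
  rw [← himg, Finset.sum_image]
  intro x hx y hy hxy
  by_contra hne
  have : x ∈ s.erase y := Finset.mem_erase.mpr ⟨hne, hx⟩
  rw [← hxy] at this
  exact (Finset.notMem_erase x s) this

/-- The key sum-swap ("adjointness") identity. -/
lemma adjoint_swap (j : ℕ) (a g : Finset V → ℝ) :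
    ∑ s ∈ X.faces (j + 1), a s * ∑ x ∈ s, g (s.erase x) =
      ∑ t ∈ X.faces j, (∑ s ∈ (X.faces (j + 1)).filter (fun s => t ⊆ s), a s) * g t := by
  have step1 : ∀ s ∈ X.faces (j + 1),
      a s * ∑ x ∈ s, g (s.erase x) =
        ∑ t ∈ s.powerset.filter (fun t => t.card = j), a s * g t := by
    intro s hs
    rw [sum_erase_eq (card_of_mem_faces X hs) g, Finset.mul_sum]
  rw [Finset.sum_congr rfl step1]
  rw [Finset.sum_comm' (t' := X.faces j)
    (s' := fun t => (X.faces (j + 1)).filter (fun s => t ⊆ s)) ?_]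
  · exact Finset.sum_congr rfl fun t _ => by rw [Finset.sum_mul]
  · intro s t
    simp only [Finset.mem_filter, Finset.mem_powerset]
    constructor
    · rintro ⟨hs, hts, htc⟩
      refine ⟨⟨hs, hts⟩, ?_⟩
      have := subset_mem_faces X hs hts
      rwa [htc] at this
    · rintro ⟨⟨hs, hts⟩, ht⟩
      exact ⟨hs, hts, card_of_mem_faces X ht⟩

end HarmAux2

namespace HarmAux3

open WSC HarmAux HarmAux2

variable {V : Type} [DecidableEq V] [Fintype V] {k : ℕ} (X : WSC V k)

lemma UU_add (j : ℕ) (g₁ g₂ : Finset V → ℝ) :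
    UU X j (g₁ + g₂) = UU X j g₁ + UU X j g₂ := by
  funext s
  simp only [UU, Pi.add_apply]
  split
  · rw [Finset.sum_add_distrib, add_div]
  · rw [add_zero]

lemma UU_smul (j : ℕ) (c : ℝ) (g : Finset V → ℝ) :
    UU X j (c • g) = c • UU X j g := by
  funext s
  simp only [UU, Pi.smul_apply, smul_eq_mul]
  split
  · rw [← Finset.mul_sum, mul_div_assoc]
  · rw [mul_zero]

lemma NN_add (j : ℕ) (f₁ f₂ : Finset V → ℝ) :
    NN X j (f₁ + f₂) = NN X j f₁ + NN X j f₂ := by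
  funext t
  simp only [NN, Pi.add_apply]
  split
  · rw [← Finset.sum_add_distrib]
    exact Finset.sum_congr rfl fun s _ => by ring
  · rw [add_zero]

lemma NN_smul (j : ℕ) (c : ℝ) (f : Finset V → ℝ) :
    NN X j (c • f) = c • NN X j f := by
  funext t
  simp only [NN, Pi.smul_apply, smul_eq_mul]
  split
  · rw [Finset.mul_sum]
    exact Finset.sum_congr rfl fun s _ => by ring
  · rw [mul_zero]

/-- The auxiliary endomorphism used to prove surjectivity of `N ∘ U`. -/
def phi (j : ℕ) : (Finset V → ℝ) →ₗ[ℝ] (Finset V → ℝ) where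
  toFun g := fun t => if t ∈ X.faces j then NN X j (UU X j g) t else g t
  map_add' g₁ g₂ := by
    funext t
    show (if t ∈ X.faces j then NN X j (UU X j (g₁ + g₂)) t else (g₁ + g₂) t) = _
    rw [UU_add, NN_add]
    by_cases ht : t ∈ X.faces j <;> simp [ht]
  map_smul' c g := by
    funext t
    show (if t ∈ X.faces j then NN X j (UU X j (c • g)) t else (c • g) t) = _
    rw [UU_smul, NN_smul]
    by_cases ht : t ∈ X.faces j <;> simp [ht]

/-- Properness gives injectivity of `N ∘ U` on `C^{j-1}`. -/
lemma NU_inj (hX : X.Proper) {j : ℕ} (hj : j ≤ k) (g : Finset V → ℝ)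
    (hg : Supp X j g) (h0 : ∀ t, NN X j (UU X j g) t = 0) : ∀ t, g t = 0 := by
  have key : ∑ s ∈ X.faces (j + 1),
      (X.dist (j + 1) s * UU X j g s) * ∑ x ∈ s, g (s.erase x) = 0 := by
    rw [adjoint_swap]
    apply Finset.sum_eq_zero
    intro t ht
    have : (∑ s ∈ (X.faces (j + 1)).filter (fun s => t ⊆ s),
        X.dist (j + 1) s * UU X j g s) = NN X j (UU X j g) t := by
      simp only [NN, if_pos ht]
    rw [this, h0 t, zero_mul]
  have key2 : ∑ s ∈ X.faces (j + 1),
      X.dist (j + 1) s * UU X j g s * UU X j g s = 0 := by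
    have hne : ((j : ℝ) + 1) ≠ 0 := by positivity
    have : ∀ s ∈ X.faces (j + 1),
        (X.dist (j + 1) s * UU X j g s) * ∑ x ∈ s, g (s.erase x) =
          ((j : ℝ) + 1) * (X.dist (j + 1) s * UU X j g s * UU X j g s) := by
      intro s hs
      simp only [UU, if_pos hs]
      field_simp
    rw [Finset.sum_congr rfl this, ← Finset.mul_sum] at key
    exact (mul_eq_zero.mp key).resolve_left hne
  have hz : ∀ s ∈ X.faces (j + 1), UU X j g s = 0 := by
    have hnn : ∀ s ∈ X.faces (j + 1),
        0 ≤ X.dist (j + 1) s * UU X j g s * UU X j g s := by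
      intro s hs
      rw [mul_assoc]
      exact mul_nonneg (dist_pos X hs).le (mul_self_nonneg _)
    intro s hs
    have := (Finset.sum_eq_zero_iff_of_nonneg hnn).mp key2 s hs
    rw [mul_assoc, mul_eq_zero] at this
    rcases this with h | h
    · exact absurd h (dist_pos X hs).ne'
    · exact mul_self_eq_zero.mp h
  intro t
  apply hX j hj g hg _ t
  intro s hs
  have : X.up j g s = UU X j g s := by simp [UU, WSC.up, if_pos hs]
  rw [this]
  exact hz s hs

/-- Properness gives surjectivity of `N ∘ U` onto `C^{j-1}`. -/
lemma NU_surj (hX : X.Proper) {j : ℕ} (hj : j ≤ k) (f : Finset V → ℝ)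
    (hf : Supp X j f) : ∃ g, Supp X j g ∧ ∀ t, NN X j (UU X j g) t = f t := by
  have hinj : Function.Injective (phi X j) := by
    rw [injective_iff_map_eq_zero]
    intro g hg0
    have hsupp : Supp X j g := by
      intro t ht
      have := congrFun hg0 t
      simpa [phi, if_neg ht] using this
    have hNN : ∀ t, NN X j (UU X j g) t = 0 := by
      intro t
      by_cases ht : t ∈ X.faces j
      · have := congrFun hg0 t
        simpa [phi, if_pos ht] using this
      · simp [NN, if_neg ht]
    funext t
    exact NU_inj X hX hj g hsupp hNN t
  obtain ⟨g, hg⟩ := (LinearMap.injective_iff_surjective.mp hinj) f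
  have hgsupp : Supp X j g := by
    intro t ht
    have := congrFun hg t
    rw [show phi X j g t = g t by simp [phi, if_neg ht]] at this
    rw [this]
    exact hf t ht
  refine ⟨g, hgsupp, fun t => ?_⟩
  by_cases ht : t ∈ X.faces j
  · have := congrFun hg t
    rwa [show phi X j g t = NN X j (UU X j g) t by simp [phi, if_pos ht]] at this
  · rw [hf t ht]; simp [NN, if_neg ht]

/-- Decomposition `f = U g + h` with `h` harmonic. -/
lemma decomp (hX : X.Proper) {j : ℕ} (hj : j ≤ k) (f : Finset V → ℝ)
    (hf : Supp X (j + 1) f) :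
    ∃ g h, Supp X j g ∧ Supp X (j + 1) h ∧ (∀ t, NN X j h t = 0) ∧
      ∀ r, f r = UU X j g r + h r := by
  obtain ⟨g, hgsupp, hgNN⟩ := NU_surj X hX hj (NN X j f) (fun t ht => by simp [NN, if_neg ht])
  refine ⟨g, fun r => f r - UU X j g r, hgsupp, ?_, ?_, fun r => by ring⟩
  · intro t ht
    show f t - UU X j g t = 0
    rw [hf t ht, (supp_UU X g) t ht, sub_zero]
  · intro t
    by_cases ht : t ∈ X.faces j
    · have h1 : NN X j (fun r => f r - UU X j g r) t =
          NN X j f t - NN X j (UU X j g) t := by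
        simp only [NN, if_pos ht, mul_sub, Finset.sum_sub_distrib]
      rw [h1, hgNN t, sub_self]
    · simp [NN, if_neg ht]

end HarmAux3

namespace HarmAux4

open WSC HarmAux HarmAux2 HarmAux3

variable {V : Type} [DecidableEq V] [Fintype V] {k : ℕ}

/-- Guarded iterated up operator. -/
def UIter (X : WSC V k) (i : ℕ) : ℕ → (Finset V → ℝ) → (Finset V → ℝ)
  | 0, h => h
  | (m + 1), h => UU X (i + m) (UIter X i m h)

variable (X : WSC V k)

lemma supp_UIter {i : ℕ} {h : Finset V → ℝ} (hh : Supp X i h) :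
    ∀ m, Supp X (i + m) (UIter X i m h)
  | 0 => hh
  | (m + 1) => supp_UU X _

lemma UU_sum {ι : Type} (j : ℕ) (A : Finset ι) (F : ι → Finset V → ℝ) (s : Finset V) :
    UU X j (fun t => ∑ i ∈ A, F i t) s = ∑ i ∈ A, UU X j (F i) s := by
  simp only [UU]
  split
  · rw [Finset.sum_comm, ← Finset.sum_div]
  · rw [Finset.sum_const_zero]

lemma UIter_succ_top {j i : ℕ} (hi : i ≤ j) (h : Finset V → ℝ) :
    UIter X i (j + 1 - i) h = UU X j (UIter X i (j - i) h) := by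
  have h1 : j + 1 - i = (j - i) + 1 := by omega
  rw [h1]
  show UU X (i + (j - i)) _ = _
  rw [show i + (j - i) = j from by omega]

/-- The peeling lemma: a vanishing sum of (iterated ups of) harmonic parts has
all parts zero. -/
lemma peel (hX : X.Proper) :
    ∀ j, j ≤ k + 1 → ∀ h : ℕ → Finset V → ℝ,
      (∀ i, i ≤ j → Supp X i (h i)) →
      (∀ i, 1 ≤ i → i ≤ j → ∀ t, NN X (i - 1) (h i) t = 0) →
      (∀ r ∈ X.faces j, ∑ i ∈ Finset.range (j + 1), UIter X i (j - i) (h i) r = 0) →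
      ∀ i, i ≤ j → ∀ t, h i t = 0 := by
  intro j
  induction j with
  | zero =>
    intro _ h hsupp _ hrep i hi t
    interval_cases i
    by_cases ht : t ∈ X.faces 0
    · have := hrep t ht
      simpa [UIter] using this
    · exact hsupp 0 le_rfl t ht
  | succ j IH =>
    intro hj h hsupp hharm hrep
    have hjk : j ≤ k := by omega
    set G : Finset V → ℝ := fun t => ∑ i ∈ Finset.range (j + 1), UIter X i (j - i) (h i) t
      with hG
    have hGsupp : Supp X j G := by
      intro t ht
      apply Finset.sum_eq_zero
      intro i hi
      rw [Finset.mem_range] at hi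
      have : i + (j - i) = j := by omega
      exact supp_UIter X (hsupp i (by omega)) (j - i) t (by rwa [this])
    have hrep' : ∀ r ∈ X.faces (j + 1), UU X j G r + h (j + 1) r = 0 := by
      intro r hr
      have := hrep r hr
      rw [Finset.sum_range_succ] at this
      have h2 : UIter X (j + 1) (j + 1 - (j + 1)) (h (j + 1)) r = h (j + 1) r := by
        rw [Nat.sub_self]; rfl
      rw [h2] at this
      have h3 : ∀ i ∈ Finset.range (j + 1),
          UIter X i (j + 1 - i) (h i) r = UU X j (UIter X i (j - i) (h i)) r := by
        intro i hi
        rw [Finset.mem_range] at hi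
        rw [UIter_succ_top X (by omega)]
      rw [Finset.sum_congr rfl h3] at this
      rw [← this]
      congr 1
      rw [hG, UU_sum]
    -- pair with h (j+1)
    have key : ∑ r ∈ X.faces (j + 1),
        X.dist (j + 1) r * h (j + 1) r * (UU X j G r + h (j + 1) r) = 0 := by
      apply Finset.sum_eq_zero
      intro r hr
      rw [hrep' r hr, mul_zero]
    have hA : ∑ r ∈ X.faces (j + 1), X.dist (j + 1) r * h (j + 1) r * UU X j G r = 0 := by
      have e1 : ∀ r ∈ X.faces (j + 1),
          X.dist (j + 1) r * h (j + 1) r * UU X j G r =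
            (X.dist (j + 1) r * h (j + 1) r * (∑ x ∈ r, G (r.erase x))) / ((j : ℝ) + 1) := by
        intro r hr
        simp only [UU, if_pos hr]
        ring
      rw [Finset.sum_congr rfl e1, ← Finset.sum_div]
      have e2 : ∑ r ∈ X.faces (j + 1),
          X.dist (j + 1) r * h (j + 1) r * ∑ x ∈ r, G (r.erase x) = 0 := by
        rw [adjoint_swap]
        apply Finset.sum_eq_zero
        intro t ht
        have : (∑ s ∈ (X.faces (j + 1)).filter (fun s => t ⊆ s),
            X.dist (j + 1) s * h (j + 1) s) = NN X j (h (j + 1)) t := by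
          simp only [NN, if_pos ht]
        have h4 := hharm (j + 1) (by omega) le_rfl t
        simp only [Nat.add_sub_cancel] at h4
        rw [this, h4, zero_mul]
      rw [e2, zero_div]
    have hB : ∑ r ∈ X.faces (j + 1),
        X.dist (j + 1) r * h (j + 1) r * h (j + 1) r = 0 := by
      have := key
      simp only [mul_add] at this
      rw [Finset.sum_add_distrib, hA, zero_add] at this
      exact this
    have htop0 : ∀ t, h (j + 1) t = 0 := by
      have hz : ∀ r ∈ X.faces (j + 1), h (j + 1) r = 0 := by
        have hnn : ∀ r ∈ X.faces (j + 1),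
            0 ≤ X.dist (j + 1) r * h (j + 1) r * h (j + 1) r := by
          intro r hr
          rw [mul_assoc]
          exact mul_nonneg (dist_pos X hr).le (mul_self_nonneg _)
        intro r hr
        have := (Finset.sum_eq_zero_iff_of_nonneg hnn).mp hB r hr
        rw [mul_assoc, mul_eq_zero] at this
        rcases this with h' | h'
        · exact absurd h' (dist_pos X hr).ne'
        · exact mul_self_eq_zero.mp h'
      intro t
      by_cases ht : t ∈ X.faces (j + 1)
      · exact hz t ht
      · exact hsupp (j + 1) le_rfl t ht
    have hG0 : ∀ t, G t = 0 := by
      apply hX j hjk G hGsupp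
      intro s hs
      have h1 : X.up j G s = UU X j G s := by simp [UU, WSC.up, if_pos hs]
      rw [h1]
      have := hrep' s hs
      rw [htop0 s, add_zero] at this
      exact this
    have hlow : ∀ i, i ≤ j → ∀ t, h i t = 0 := by
      apply IH (by omega) h (fun i hi => hsupp i (by omega))
        (fun i h1 h2 => hharm i h1 (by omega))
      intro r hr
      exact hG0 r
    intro i hi t
    rcases Nat.lt_or_ge i (j + 1) with h' | h'
    · exact hlow i (by omega) t
    · have : i = j + 1 := by omega
      rw [this]
      exact htop0 t

end HarmAux4

namespace HarmAux5

open WSC HarmAux HarmAux2 HarmAux3 HarmAux4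

variable {V : Type} [DecidableEq V] [Fintype V] {k : ℕ} (X : WSC V k)

lemma powerset_filter_card_self {r : Finset V} {i : ℕ} (hc : r.card = i) :
    r.powerset.filter (fun s => s.card = i) = {r} := by
  ext t
  simp only [Finset.mem_filter, Finset.mem_powerset, Finset.mem_singleton]
  constructor
  · rintro ⟨hts, htc⟩
    exact Finset.eq_of_subset_of_card_le hts (by omega)
  · rintro rfl
    exact ⟨Finset.Subset.refl _, hc⟩

/-- Closed formula for the iterated up operator applied to a function supported
on cardinality-`i` faces. -/
lemma UIter_eq {i : ℕ} (h : Finset V → ℝ) :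
    ∀ m, ∀ r ∈ X.faces (i + m),
      UIter X i m h r =
        (∑ s ∈ r.powerset.filter (fun s => s.card = i), h s) / ((i + m).choose i) := by
  intro m
  induction m with
  | zero =>
    intro r hr
    have hc : r.card = i := card_of_mem_faces X hr
    rw [powerset_filter_card_self hc, Finset.sum_singleton]
    show h r = _
    rw [Nat.add_zero, Nat.choose_self]
    norm_num
  | succ m IH =>
    intro r hr
    have hr' : r ∈ X.faces ((i + m) + 1) := hr
    have hrc : r.card = i + m + 1 := card_of_mem_faces X hr'
    show UU X (i + m) (UIter X i m h) r = _
    simp only [UU, if_pos hr']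
    have herase : ∀ x ∈ r, UIter X i m h (r.erase x) =
        (∑ s ∈ (r.erase x).powerset.filter (fun s => s.card = i), h s) /
          ((i + m).choose i) := by
      intro x hx
      exact IH (r.erase x) (erase_mem_faces X hr' hx)
    rw [Finset.sum_congr rfl herase, ← Finset.sum_div]
    have hswap : ∑ x ∈ r, ∑ s ∈ (r.erase x).powerset.filter (fun s => s.card = i), h s
        = ∑ s ∈ r.powerset.filter (fun s => s.card = i), ((m : ℝ) + 1) * h s := by
      rw [Finset.sum_comm' (t' := r.powerset.filter (fun s => s.card = i))
        (s' := fun s => r \ s) ?_]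
      · apply Finset.sum_congr rfl
        intro s hs
        rw [Finset.mem_filter, Finset.mem_powerset] at hs
        rw [Finset.sum_const, Finset.card_sdiff_of_subset hs.1, hrc, hs.2, nsmul_eq_mul,
          show i + m + 1 - i = m + 1 from by omega]
        push_cast
        ring
      · intro x s
        simp only [Finset.mem_filter, Finset.mem_powerset, Finset.mem_sdiff]
        constructor
        · rintro ⟨hx, hse, hsc⟩
          rw [Finset.subset_erase] at hse
          exact ⟨⟨hx, hse.2⟩, hse.1, hsc⟩
        · rintro ⟨⟨hx, hxs⟩, hsr, hsc⟩
          exact ⟨hx, Finset.subset_erase.mpr ⟨hsr, hxs⟩, hsc⟩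
    have h0 : (0:ℝ) < (((i + m).choose i : ℕ) : ℝ) := by
      exact_mod_cast Nat.choose_pos (Nat.le_add_right i m)
    have h1 : (0:ℝ) < (((i + (m + 1)).choose i : ℕ) : ℝ) := by
      exact_mod_cast Nat.choose_pos (by omega : i ≤ i + (m + 1))
    rw [hswap, ← Finset.mul_sum, div_div,
      div_eq_div_iff (mul_pos h0 (by positivity)).ne' h1.ne']
    have hnat : (m + 1) * ((i + (m + 1)).choose i) = (i + m + 1) * ((i + m).choose i) := by
      have e1 : (i + m).choose i = (i + m).choose m := by
        have h' := Nat.choose_symm (Nat.le_add_right i m)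
        rw [show i + m - i = m from by omega] at h'
        exact h'.symm
      have e2 : (i + (m + 1)).choose i = (i + m + 1).choose (m + 1) := by
        have h' := Nat.choose_symm (by omega : i ≤ i + m + 1)
        rw [show i + m + 1 - i = m + 1 from by omega] at h'
        exact h'.symm
      rw [e1, e2]
      have h'' := Nat.add_one_mul_choose_eq (i + m) m
      rw [h'']
      exact Nat.mul_comm _ _
    have hchoose : ((m : ℝ) + 1) * (((i + (m + 1)).choose i : ℕ) : ℝ) =
        ((i : ℝ) + m + 1) * (((i + m).choose i : ℕ) : ℝ) := by
      exact_mod_cast hnat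
    push_cast
    push_cast at hchoose
    linear_combination (∑ s ∈ r.powerset.filter (fun s => s.card = i), h s) * hchoose

end HarmAux5

namespace HarmAux6

open WSC HarmAux HarmAux2 HarmAux3 HarmAux4 HarmAux5

variable {V : Type} [DecidableEq V] [Fintype V] {k : ℕ} (X : WSC V k)

/-- Existence of the harmonic decomposition. -/
lemma exists_harm_decomp (hX : X.Proper) :
    ∀ j, j ≤ k + 1 → ∀ f, Supp X j f →
      ∃ h : ℕ → Finset V → ℝ,
        (∀ i, i ≤ j → Supp X i (h i)) ∧
        (∀ i, 1 ≤ i → i ≤ j → ∀ t, NN X (i - 1) (h i) t = 0) ∧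
        (∀ r ∈ X.faces j, f r = ∑ i ∈ Finset.range (j + 1), UIter X i (j - i) (h i) r) := by
  intro j
  induction j with
  | zero =>
    intro _ f hf
    refine ⟨fun i => if i = 0 then f else 0, ?_, ?_, ?_⟩
    · intro i hi
      interval_cases i
      simpa using hf
    · intro i h1 h2; omega
    · intro r _
      simp [UIter]
  | succ j IH =>
    intro hj f hf
    have hjk : j ≤ k := by omega
    obtain ⟨g, h', hgsupp, hh'supp, hh'harm, hdec⟩ := decomp X hX hjk f hf
    obtain ⟨h, hsupp, hharm, hrep⟩ := IH (by omega) g hgsupp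
    refine ⟨fun i => if i = j + 1 then h' else h i, ?_, ?_, ?_⟩
    · intro i hi
      by_cases hij : i = j + 1
      · subst hij; simpa using hh'supp
      · simpa only [if_neg hij] using hsupp i (by omega)
    · intro i h1 h2 t
      by_cases hij : i = j + 1
      · subst hij
        simp only [if_pos rfl, Nat.add_sub_cancel]
        exact hh'harm t
      · simpa only [if_neg hij] using hharm i h1 (by omega) t
    · intro r hr
      rw [hdec r, Finset.sum_range_succ]
      have h2 : UIter X (j + 1) (j + 1 - (j + 1))
          (if j + 1 = j + 1 then h' else h (j + 1)) r = h' r := by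
        rw [Nat.sub_self, if_pos rfl]; rfl
      rw [h2]
      congr 1
      have h3 : ∀ i ∈ Finset.range (j + 1),
          UIter X i (j + 1 - i) (if i = j + 1 then h' else h i) r =
            UU X j (UIter X i (j - i) (h i)) r := by
        intro i hi
        rw [Finset.mem_range] at hi
        rw [if_neg (by omega), UIter_succ_top X (by omega)]
      rw [Finset.sum_congr rfl h3]
      set G : Finset V → ℝ := fun t => ∑ i ∈ Finset.range (j + 1), UIter X i (j - i) (h i) t
        with hG
      have hgG : g = G := by
        funext t
        by_cases ht : t ∈ X.faces j
        · exact hrep t ht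
        · rw [hgsupp t ht, hG]
          exact (Finset.sum_eq_zero fun i hi => by
            rw [Finset.mem_range] at hi
            exact supp_UIter X (hsupp i (by omega)) (j - i) t
              (by rwa [show i + (j - i) = j from by omega])).symm
      rw [hgG]
      rw [← UU_sum]

/-- Translation of the `y_s`-representation into a fiberwise sum. -/
lemma rep_eq (c : Finset V → ℝ) {r : Finset V} (hr : r ∈ X.faces (k + 1)) :
    ∑ s ∈ X.allFaces, c s * WSC.ys s r =
      ∑ i ∈ Finset.range (k + 2), ∑ s ∈ r.powerset.filter (fun s => s.card = i), c s := by
  have h1 : ∑ s ∈ X.allFaces, c s * WSC.ys s r = ∑ s ∈ r.powerset, c s := by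
    have e : ∀ s ∈ X.allFaces, c s * WSC.ys s r = if s ⊆ r then c s else 0 := by
      intro s _
      simp only [WSC.ys]
      split <;> simp
    rw [Finset.sum_congr rfl e, ← Finset.sum_filter]
    congr 1
    ext s
    simp only [Finset.mem_filter, Finset.mem_powerset]
    constructor
    · exact fun h => h.2
    · intro hsr
      exact ⟨faces_subset_allFaces X (subset_mem_faces X hr hsr), hsr⟩
  rw [h1]
  exact (Finset.sum_fiberwise_of_maps_to (fun s hs => by
    rw [Finset.mem_powerset] at hs
    rw [Finset.mem_range]
    have := Finset.card_le_card hs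
    have := card_of_mem_faces X hr
    omega) c).symm

/-- Uniqueness: a harmonic coefficient family representing zero is zero. -/
lemma rep_unique (hX : X.Proper) (c : Finset V → ℝ)
    (hsupp : ∀ s, s ∉ X.allFaces → c s = 0)
    (hharm : ∀ i, i ≤ k → ∀ t ∈ X.faces i,
      ∑ s ∈ (X.faces (i + 1)).filter (fun s => t ⊆ s), X.dist (i + 1) s * c s = 0)
    (hrep0 : ∀ r ∈ X.faces (k + 1), ∑ s ∈ X.allFaces, c s * WSC.ys s r = 0) :
    ∀ s, c s = 0 := by
  set h : ℕ → Finset V → ℝ :=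
    fun i s => if s ∈ X.allFaces ∧ s.card = i then (((k + 1).choose i : ℕ) : ℝ) * c s else 0
    with hh
  have hmem : ∀ i s, s ∈ X.allFaces → s.card = i → s ∈ X.faces i := by
    intro i s hs hc
    have := mem_faces_card X hs
    rwa [hc] at this
  have hsupp' : ∀ i, Supp X i (h i) := by
    intro i t ht
    rw [hh]
    simp only
    rw [if_neg]
    rintro ⟨h1, h2⟩
    exact ht (hmem i t h1 h2)
  have hharm' : ∀ i, 1 ≤ i → i ≤ k + 1 → ∀ t, NN X (i - 1) (h i) t = 0 := by
    intro i h1 h2 t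
    simp only [NN]
    split
    case isFalse => rfl
    case isTrue ht =>
      have e : ∀ s ∈ (X.faces (i - 1 + 1)).filter (fun s => t ⊆ s),
          X.dist (i - 1 + 1) s * h i s =
            (((k + 1).choose i : ℕ) : ℝ) * (X.dist (i - 1 + 1) s * c s) := by
        intro s hs
        rw [Finset.mem_filter] at hs
        have hsf := hs.1
        have hcard : s.card = i := by
          have := card_of_mem_faces X hsf
          omega
        rw [hh]
        simp only
        rw [if_pos ⟨faces_subset_allFaces X hsf, hcard⟩]
        ring
      rw [Finset.sum_congr rfl e, ← Finset.mul_sum,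
        hharm (i - 1) (by omega) t ht, mul_zero]
  have hrep' : ∀ r ∈ X.faces (k + 1),
      ∑ i ∈ Finset.range (k + 2), UIter X i (k + 1 - i) (h i) r = 0 := by
    intro r hr
    have e : ∀ i ∈ Finset.range (k + 2),
        UIter X i (k + 1 - i) (h i) r =
          ∑ s ∈ r.powerset.filter (fun s => s.card = i), c s := by
      intro i hi
      rw [Finset.mem_range] at hi
      have hik : i ≤ k + 1 := by omega
      have hr' : r ∈ X.faces (i + (k + 1 - i)) := by
        rwa [show i + (k + 1 - i) = k + 1 from by omega]
      rw [UIter_eq X (h i) (k + 1 - i) r hr',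
        show i + (k + 1 - i) = k + 1 from by omega]
      have hC : (((k + 1).choose i : ℕ) : ℝ) ≠ 0 := by
        exact_mod_cast (Nat.choose_pos hik).ne'
      rw [Finset.sum_congr rfl (fun s hs => ?_), ← Finset.sum_mul,
        mul_div_assoc, div_self hC, mul_one]
      rw [Finset.mem_filter, Finset.mem_powerset] at hs
      have hsa : s ∈ X.allFaces :=
        faces_subset_allFaces X (subset_mem_faces X hr hs.1)
      rw [hh]
      simp only
      rw [if_pos ⟨hsa, hs.2⟩]
      ring
    rw [Finset.sum_congr rfl e, ← rep_eq X c hr, hrep0 r hr]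
  have hzero := peel X hX (k + 1) le_rfl h (fun i _ => hsupp' i)
    (fun i h1 h2 => hharm' i h1 h2) hrep'
  intro s
  by_cases hs : s ∈ X.allFaces
  · have h3 := hzero s.card (card_le_of_mem_allFaces X hs) s
    rw [hh] at h3
    simp only [hs, true_and, and_self, if_true, ite_true] at h3
    have h4 : (((k + 1).choose s.card : ℕ) : ℝ) * c s = 0 := by simpa [hs] using h3
    have hC : (((k + 1).choose s.card : ℕ) : ℝ) ≠ 0 := by
      exact_mod_cast (Nat.choose_pos (card_le_of_mem_allFaces X hs)).ne'
    rcases mul_eq_zero.mp h4 with h' | h'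
    · exact absurd h' hC
    · exact h'
  · exact hsupp s hs

end HarmAux6

/-- In a proper `k`-dimensional simplicial complex, every
`f ∈ C^k` has a unique representation `f = ∑_{s ∈ X} f̃(s) y_s`, where the
coefficients satisfy harmonicity: for all `0 ≤ i ≤ k` and `t ∈ X(i-1)`,
`∑_{s ∈ X(i), s ⊇ t} Dist_i(s) f̃(s) = 0`. -/
theorem harmonic_representation {V : Type} [DecidableEq V] [Fintype V] {k : ℕ}
    (X : WSC V k) (hX : X.Proper) (f : Finset V → ℝ) :
    ∃! c : Finset V → ℝ,
      (∀ s, s ∉ X.allFaces → c s = 0) ∧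
      (∀ i, i ≤ k → ∀ t ∈ X.faces i,
        ∑ s ∈ (X.faces (i + 1)).filter (fun s => t ⊆ s), X.dist (i + 1) s * c s = 0) ∧
      (∀ r ∈ X.faces (k + 1), f r = ∑ s ∈ X.allFaces, c s * WSC.ys s r) := by
  classical
  open HarmAux HarmAux2 HarmAux3 HarmAux4 HarmAux5 HarmAux6 in
  · set f' : Finset V → ℝ := fun r => if r ∈ X.faces (k + 1) then f r else 0 with hf'
    have hf'supp : Supp X (k + 1) f' := fun t ht => by simp [hf', if_neg ht]
    obtain ⟨h, hsupp, hharm, hrep⟩ := exists_harm_decomp X hX (k + 1) le_rfl f' hf'supp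
    set c : Finset V → ℝ := fun s =>
      if s ∈ X.allFaces then h s.card s / (((k + 1).choose s.card : ℕ) : ℝ) else 0 with hc
    have hcsupp : ∀ s, s ∉ X.allFaces → c s = 0 := by
      intro s hs
      rw [hc]
      simp only
      rw [if_neg hs]
    have hcharm : ∀ i, i ≤ k → ∀ t ∈ X.faces i,
        ∑ s ∈ (X.faces (i + 1)).filter (fun s => t ⊆ s), X.dist (i + 1) s * c s = 0 := by
      intro i hi t ht
      have e : ∀ s ∈ (X.faces (i + 1)).filter (fun s => t ⊆ s),
          X.dist (i + 1) s * c s =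
            (X.dist (i + 1) s * h (i + 1) s) / (((k + 1).choose (i + 1) : ℕ) : ℝ) := by
        intro s hs
        rw [Finset.mem_filter] at hs
        have hcard := card_of_mem_faces X hs.1
        rw [hc]
        simp only
        rw [if_pos (faces_subset_allFaces X hs.1), hcard]
        ring
      rw [Finset.sum_congr rfl e, ← Finset.sum_div]
      have hN : NN X i (h (i + 1)) t = 0 := by
        have := hharm (i + 1) (by omega) (by omega) t
        simpa only [Nat.add_sub_cancel] using this
      have e2 : ∑ s ∈ (X.faces (i + 1)).filter (fun s => t ⊆ s),
          X.dist (i + 1) s * h (i + 1) s = NN X i (h (i + 1)) t := by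
        simp only [NN, if_pos ht]
      rw [e2, hN, zero_div]
    have hcrep : ∀ r ∈ X.faces (k + 1), f r = ∑ s ∈ X.allFaces, c s * WSC.ys s r := by
      intro r hr
      have h0 : f r = f' r := by rw [hf']; simp only [if_pos hr]
      rw [h0, hrep r hr, rep_eq X c hr]
      apply Finset.sum_congr rfl
      intro i hi
      rw [Finset.mem_range] at hi
      have hr' : r ∈ X.faces (i + (k + 1 - i)) := by
        rwa [show i + (k + 1 - i) = k + 1 from by omega]
      rw [UIter_eq X (h i) (k + 1 - i) r hr',
        show i + (k + 1 - i) = k + 1 from by omega, Finset.sum_div]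
      apply Finset.sum_congr rfl
      intro s hs
      rw [Finset.mem_filter, Finset.mem_powerset] at hs
      have hsa : s ∈ X.allFaces := faces_subset_allFaces X (subset_mem_faces X hr hs.1)
      rw [hc]
      simp only
      rw [if_pos hsa, hs.2]
    refine ⟨c, ⟨hcsupp, hcharm, hcrep⟩, ?_⟩
    rintro c' ⟨h1, h2, h3⟩
    funext s
    have hz := rep_unique X hX (fun s => c' s - c s)
      (fun s hs => by show c' s - c s = 0; rw [h1 s hs, hcsupp s hs, sub_zero])
      (fun i hi t ht => by
        simp only [mul_sub, Finset.sum_sub_distrib]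
        rw [h2 i hi t ht, hcharm i hi t ht, sub_self])
      (fun r hr => by
        simp only [sub_mul, Finset.sum_sub_distrib]
        rw [← h3 r hr, ← hcrep r hr, sub_self]) s
    exact sub_eq_zero.mp hz
end
end

section
/- If X is a proper k-dimensional simplicial complex, then the functions { y_s : s ∈ X(d) } form a basis of the space of functions on X(k) of degree at most d+1 (the span of { y_t : t ∈ X(i), i ≤ d }). In particular, for t ∈ X(i) with i ≤ d, y_t = (1 / C(k+1−|t|, d+1−|t|)) · Σ_{s∈X(d), s⊇t} y_s. -/
open Finset

noncomputable section

namespace WSC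

variable {V : Type} [DecidableEq V] [Fintype V] {k : ℕ}

lemma mem_faces_iff {d : ℕ} (X : WSC V d) {j : ℕ} {t : Finset V} :
    t ∈ X.faces j ↔ t.card = j ∧ ∃ s ∈ X.top, t ⊆ s := by
  simp [faces]

lemma subset_mem_faces {d : ℕ} (X : WSC V d) {j j' : ℕ} {t r : Finset V}
    (hr : r ∈ X.faces j) (ht : t ⊆ r) (hc : t.card = j') : t ∈ X.faces j' := by
  rw [X.mem_faces_iff] at hr ⊢
  obtain ⟨_, s, hs, hrs⟩ := hr
  exact ⟨hc, s, hs, ht.trans hrs⟩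

lemma sum_ysRes_eq (X : WSC V k) {i m : ℕ} (him : i ≤ m) (hm : m ≤ k)
    {t : Finset V} (ht : t ∈ X.faces (i + 1)) (r : Finset V) :
    ∑ s ∈ (X.faces (m + 1)).filter (fun s => t ⊆ s), X.ysRes s r
      = ((k - i).choose (m - i) : ℝ) * X.ysRes t r := by
  have htc : t.card = i + 1 := (X.mem_faces_iff.mp ht).1
  by_cases hr : r ∈ X.faces (k + 1) ∧ t ⊆ r
  · obtain ⟨hrf, htr⟩ := hr
    have hrc : r.card = k + 1 := (X.mem_faces_iff.mp hrf).1
    rw [show X.ysRes t r = 1 from if_pos ⟨hrf, htr⟩, mul_one]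
    have h1 : ∑ s ∈ (X.faces (m + 1)).filter (fun s => t ⊆ s), X.ysRes s r
        = ∑ _s ∈ (X.faces (m + 1)).filter (fun s => t ⊆ s ∧ s ⊆ r), (1 : ℝ) := by
      rw [Finset.sum_filter, Finset.sum_filter]
      refine Finset.sum_congr rfl fun s hs => ?_
      by_cases h1 : t ⊆ s
      · by_cases h2 : s ⊆ r
        · simp [h1, h2, ysRes, ysRes, hrf]
        · simp [ysRes, h1, h2]
      · simp [h1]
    rw [h1, Finset.sum_const, nsmul_eq_mul, mul_one]
    have hcard : ((X.faces (m + 1)).filter (fun s => t ⊆ s ∧ s ⊆ r)).card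
        = ((r \ t).powersetCard (m - i)).card := by
      apply Finset.card_bij' (fun s _ => s \ t) (fun u _ => u ∪ t)
      · intro s hs
        obtain ⟨hsf, hts, hsr⟩ := Finset.mem_filter.mp hs
        have hsc : s.card = m + 1 := (X.mem_faces_iff.mp hsf).1
        rw [Finset.mem_powersetCard]
        exact ⟨Finset.sdiff_subset_sdiff hsr le_rfl,
          by rw [Finset.card_sdiff_of_subset hts, hsc, htc]; omega⟩
      · intro u hu
        rw [Finset.mem_powersetCard] at hu
        obtain ⟨hur, huc⟩ := hu
        have hdisj : Disjoint u t := Finset.disjoint_of_subset_left hur Finset.sdiff_disjoint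
        have hsub : u ∪ t ⊆ r := Finset.union_subset (hur.trans (Finset.sdiff_subset)) htr
        have hcard : (u ∪ t).card = m + 1 := by
          rw [Finset.card_union_of_disjoint hdisj, huc, htc]; omega
        exact Finset.mem_filter.mpr ⟨X.subset_mem_faces hrf hsub hcard,
          Finset.subset_union_right, hsub⟩
      · intro s hs
        obtain ⟨_, hts, _⟩ := Finset.mem_filter.mp hs
        exact Finset.sdiff_union_of_subset hts
      · intro u hu
        rw [Finset.mem_powersetCard] at hu
        have hdisj : Disjoint u t := Finset.disjoint_of_subset_left hu.1 Finset.sdiff_disjoint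
        rw [Finset.union_sdiff_right, Finset.sdiff_eq_self_of_disjoint hdisj]
    rw [hcard, Finset.card_powersetCard, Finset.card_sdiff_of_subset htr, hrc, htc]
    norm_num
    congr 1
    omega
  · rw [show X.ysRes t r = 0 from if_neg hr, mul_zero]
    refine Finset.sum_eq_zero fun s hs => ?_
    obtain ⟨_, hts⟩ := Finset.mem_filter.mp hs
    apply if_neg
    rintro ⟨hrf, hsr⟩
    exact hr ⟨hrf, hts.trans hsr⟩

lemma ysRes_eq_smul_sum (X : WSC V k) {i m : ℕ} (him : i ≤ m) (hm : m ≤ k)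
    {t : Finset V} (ht : t ∈ X.faces (i + 1)) :
    X.ysRes t = (((k - i).choose (m - i) : ℝ))⁻¹ •
      ∑ s ∈ (X.faces (m + 1)).filter (fun s => t ⊆ s), X.ysRes s := by
  have hC : ((k - i).choose (m - i) : ℝ) ≠ 0 := by
    exact_mod_cast (Nat.choose_pos (by omega)).ne'
  funext r
  rw [Pi.smul_apply, Finset.sum_apply, X.sum_ysRes_eq him hm ht r, smul_eq_mul,
    inv_mul_cancel_left₀ hC]

lemma coeff_zero (X : WSC V k) (hX : X.Proper) {m : ℕ} (hm : m ≤ k)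
    (c : Finset V → ℝ)
    (h0 : ∀ r ∈ X.faces (k + 1),
      ∑ s ∈ (X.faces (m + 1)).filter (fun s => s ⊆ r), c s = 0) :
    ∀ r ∈ X.faces (m + 1), c r = 0 := by
  set g : ℕ → Finset V → ℝ := fun l r =>
    if r ∈ X.faces (m + 1 + l) then
      ∑ s ∈ (X.faces (m + 1)).filter (fun s => s ⊆ r), c s
    else 0 with hg
  have claimA : ∀ l r, r ∈ X.faces (m + 1 + l + 1) →
      X.up (m + 1 + l) (g l) r = ((l : ℝ) + 1) / ((m : ℝ) + l + 2) * g (l + 1) r := by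
    intro l r hr
    have hrc : r.card = m + 1 + l + 1 := (X.mem_faces_iff.mp hr).1
    have hsum : ∑ x ∈ r, g l (r.erase x)
        = ((l : ℝ) + 1) * ∑ s ∈ (X.faces (m + 1)).filter (fun s => s ⊆ r), c s := by
      have step1 : ∀ x ∈ r, g l (r.erase x)
          = ∑ s ∈ (X.faces (m + 1)).filter (fun s => s ⊆ r),
              (if x ∉ s then c s else 0) := by
        intro x hx
        have hec : (r.erase x).card = m + 1 + l := by
          rw [Finset.card_erase_of_mem hx, hrc]
          omega
        have hef : r.erase x ∈ X.faces (m + 1 + l) :=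
          X.subset_mem_faces hr (Finset.erase_subset x r) hec
        simp only [hg, hef, if_pos]
        rw [show (X.faces (m + 1)).filter (fun s => s ⊆ r.erase x)
            = ((X.faces (m + 1)).filter (fun s => s ⊆ r)).filter (fun s => x ∉ s) by
          rw [Finset.filter_filter]
          refine Finset.filter_congr fun s _ => ?_
          rw [Finset.subset_erase]]
        rw [Finset.sum_filter]
      rw [Finset.sum_congr rfl step1, Finset.sum_comm]
      rw [Finset.mul_sum]
      refine Finset.sum_congr rfl fun s hs => ?_
      obtain ⟨hsf, hsr⟩ := Finset.mem_filter.mp hs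
      have hsc : s.card = m + 1 := (X.mem_faces_iff.mp hsf).1
      rw [← Finset.sum_filter, Finset.sum_const, nsmul_eq_mul]
      rw [← Finset.sdiff_eq_filter]
      have hcs : (r \ s).card = l + 1 := by
        rw [Finset.card_sdiff_of_subset hsr, hrc, hsc]
        omega
      rw [hcs]
      push_cast
      ring
    have hgl : g (l + 1) r = ∑ s ∈ (X.faces (m + 1)).filter (fun s => s ⊆ r), c s := by
      simp only [hg, show m + 1 + (l + 1) = m + 1 + l + 1 by ring, hr, if_pos]
    simp only [up]
    rw [hsum, hgl, div_mul_eq_mul_div]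
    congr 1
    push_cast
    ring
  have main : ∀ n l, l + n = k - m → ∀ r, g l r = 0 := by
    intro n
    induction n with
    | zero =>
      intro l hl r
      have hlk : l = k - m := by omega
      subst hlk
      by_cases hmem : r ∈ X.faces (m + 1 + (k - m))
      · simp only [hg, if_pos hmem]
        exact h0 r (by rwa [show m + 1 + (k - m) = k + 1 by omega] at hmem)
      · simp only [hg, if_neg hmem]
    | succ n ih =>
      intro l hl r
      refine hX (m + 1 + l) (by omega) (g l) ?_ ?_ r
      · intro u hu
        simp only [hg, if_neg hu]
      · intro s hs
        rw [claimA l s hs, ih (l + 1) (by omega) s, mul_zero]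
  intro r hr
  have h := main (k - m) 0 (by omega) r
  simp only [hg, add_zero, hr, if_pos] at h
  rwa [show (X.faces (m + 1)).filter (fun s => s ⊆ r) = {r} from by
    ext s
    simp only [Finset.mem_filter, Finset.mem_singleton]
    constructor
    · rintro ⟨hsf, hsr⟩
      refine Finset.eq_of_subset_of_card_le hsr ?_
      rw [(X.mem_faces_iff.mp hsf).1, (X.mem_faces_iff.mp hr).1]
    · rintro rfl
      exact ⟨hr, Finset.Subset.refl _⟩, Finset.sum_singleton] at h

end WSC

/-- In a proper `k`-dimensional simplicial complex, the
functions `{y_s : s ∈ X(m)}` form a basis of the space of functions on `X(k)`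
of degree at most `m+1` (the span of `{y_t : t ∈ X(i), i ≤ m}`); moreover for
`t ∈ X(i)` with `i ≤ m`,
`y_t = (1 / C(k+1-|t|, m+1-|t|)) ∑_{s ∈ X(m), s ⊇ t} y_s`. -/
theorem ys_basis {V : Type} [DecidableEq V] [Fintype V] {k : ℕ}
    (X : WSC V k) (hX : X.Proper) (m : ℕ) (hm : m ≤ k) :
    LinearIndependent ℝ (fun s : {s // s ∈ X.faces (m + 1)} => X.ysRes s.1) ∧
    Submodule.span ℝ (Set.range (fun s : {s // s ∈ X.faces (m + 1)} => X.ysRes s.1)) =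
      Submodule.span ℝ {g : Finset V → ℝ |
        ∃ i, i ≤ m ∧ ∃ t ∈ X.faces (i + 1), g = X.ysRes t} ∧
    (∀ i, i ≤ m → ∀ t ∈ X.faces (i + 1),
      X.ysRes t = (((k - i).choose (m - i) : ℝ))⁻¹ •
        ∑ s ∈ (X.faces (m + 1)).filter (fun s => t ⊆ s), X.ysRes s) := by
  have part3 : ∀ i, i ≤ m → ∀ t ∈ X.faces (i + 1),
      X.ysRes t = (((k - i).choose (m - i) : ℝ))⁻¹ •
        ∑ s ∈ (X.faces (m + 1)).filter (fun s => t ⊆ s), X.ysRes s :=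
    fun i hi t ht => X.ysRes_eq_smul_sum hi hm ht
  refine ⟨?_, ?_, part3⟩
  · rw [Fintype.linearIndependent_iff]
    intro c hc s
    classical
    set C : Finset V → ℝ := fun u => if h : u ∈ X.faces (m + 1) then c ⟨u, h⟩ else 0 with hC
    have h0 : ∀ r ∈ X.faces (k + 1),
        ∑ u ∈ (X.faces (m + 1)).filter (fun u => u ⊆ r), C u = 0 := by
      intro r hr
      have hcr : ∑ i : {s // s ∈ X.faces (m + 1)}, c i * X.ysRes i.1 r = 0 := by
        have := congrFun hc r
        rw [Finset.sum_apply] at this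
        simpa [smul_eq_mul] using this
      have heq : ∑ i : {s // s ∈ X.faces (m + 1)}, c i * X.ysRes i.1 r
          = ∑ u ∈ (X.faces (m + 1)).filter (fun u => u ⊆ r), C u := by
        have e1 : ∑ i : {s // s ∈ X.faces (m + 1)}, c i * X.ysRes i.1 r
            = ∑ u ∈ X.faces (m + 1), C u * X.ysRes u r := by
          rw [← Finset.sum_coe_sort (X.faces (m + 1)) (fun u => C u * X.ysRes u r)]
          refine Finset.sum_congr rfl fun i _ => ?_
          rw [hC]
          simp [i.2]
        rw [e1, Finset.sum_filter]
        refine Finset.sum_congr rfl fun u _ => ?_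
        by_cases hur : u ⊆ r
        · simp [WSC.ysRes, hur, hr]
        · simp [WSC.ysRes, hur]
      rw [← heq]
      exact hcr
    have := X.coeff_zero hX hm C h0 s.1 s.2
    rw [hC] at this
    simpa [s.2] using this
  · apply le_antisymm
    · refine Submodule.span_mono ?_
      rintro _ ⟨s, rfl⟩
      exact ⟨m, le_rfl, s.1, s.2, rfl⟩
    · rw [Submodule.span_le]
      rintro g ⟨i, hi, t, ht, rfl⟩
      rw [X.ysRes_eq_smul_sum hi hm ht]
      refine Submodule.smul_mem _ _ (Submodule.sum_mem _ fun s hs => ?_)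
      exact Submodule.subset_span ⟨⟨s, (Finset.mem_filter.mp hs).1⟩, rfl⟩
end
end

section
/- Let X be a k-dimensional γ-HDX with γ < 1/(k+1). Then X is proper: for all j ≤ k−1 and nonzero f ∈ C^j, ⟨U_j f, U_j f⟩ ≥ (1/(j+2) − ((j+1)/(j+2))γ)·⟨f,f⟩ > 0; in particular ker U_j = {0}. -/
open Finset

noncomputable section

namespace WSC

variable {V : Type} [DecidableEq V] [Fintype V] {d : ℕ} (X : WSC V d)

/-! ### Auxiliary lemmas -/

lemma mem_faces' {j : ℕ} {t : Finset V} :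
    t ∈ X.faces j ↔ t.card = j ∧ ∃ s ∈ X.top, t ⊆ s := by
  simp [faces]

lemma w_nonneg (s : Finset V) : 0 ≤ X.w s := by
  by_cases h : s ∈ X.top
  · exact (X.w_pos s h).le
  · exact le_of_eq (X.w_supp s h).symm

lemma dist_nonneg' (j : ℕ) (t : Finset V) : 0 ≤ X.dist j t :=
  div_nonneg (Finset.sum_nonneg fun s _ => X.w_nonneg s) (by positivity)

lemma dist_pos {j : ℕ} {t : Finset V} (ht : t ∈ X.faces j) : 0 < X.dist j t := by
  rw [X.mem_faces'] at ht
  obtain ⟨hc, s, hs, hts⟩ := ht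
  have hjd : j ≤ d + 1 := by
    rw [← hc, ← X.pure s hs]; exact Finset.card_le_card hts
  apply div_pos
  · exact Finset.sum_pos' (fun r _ => X.w_nonneg r)
      ⟨s, Finset.mem_filter.2 ⟨hs, hts⟩, X.w_pos s hs⟩
  · exact_mod_cast Nat.choose_pos hjd

lemma ip_self_nonneg (j : ℕ) (f : Finset V → ℝ) : 0 ≤ X.ip j f f :=
  Finset.sum_nonneg fun t _ => by
    rw [mul_assoc]
    exact mul_nonneg (X.dist_nonneg' j t) (mul_self_nonneg _)

lemma ip_self_pos {j : ℕ} {f : Finset V → ℝ} {t : Finset V} (ht : t ∈ X.faces j)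
    (hf : f t ≠ 0) : 0 < X.ip j f f := by
  refine Finset.sum_pos' (fun r _ => by
    rw [mul_assoc]; exact mul_nonneg (X.dist_nonneg' j r) (mul_self_nonneg _)) ⟨t, ht, ?_⟩
  rw [mul_assoc]
  exact mul_pos (X.dist_pos ht) (mul_self_pos.2 hf)

lemma erase_mem_faces {m : ℕ} {s : Finset V} (hs : s ∈ X.faces (m + 1)) {x : V}
    (hx : x ∈ s) : s.erase x ∈ X.faces m := by
  rw [X.mem_faces'] at hs ⊢
  obtain ⟨hc, S, hS, hsS⟩ := hs
  refine ⟨?_, S, hS, (Finset.erase_subset x s).trans hsS⟩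
  rw [Finset.card_erase_of_mem hx, hc]
  omega

/-- Double counting pairs `(t, s)` of faces with `t ⊆ s`, `|s| = |t| + 1`. -/
lemma exchange {m : ℕ} (F : Finset V → Finset V → ℝ) :
    ∑ s ∈ X.faces (m + 1), ∑ x ∈ s, F (s.erase x) s
      = ∑ t ∈ X.faces m, ∑ s ∈ (X.faces (m + 1)).filter (fun s => t ⊆ s), F t s := by
  have h1 : ∀ s ∈ X.faces (m + 1),
      ∑ x ∈ s, F (s.erase x) s
        = ∑ t ∈ (X.faces m).filter (fun t => t ⊆ s), F t s := by
    intro s hs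
    refine Finset.sum_nbij (fun x => s.erase x) ?_ ?_ ?_ ?_
    · intro x hx
      exact Finset.mem_filter.2 ⟨X.erase_mem_faces hs hx, Finset.erase_subset x s⟩
    · intro x hx y hy h
      exact (Finset.erase_inj s hx).1 h
    · intro t ht
      simp only [Finset.coe_filter, Set.mem_setOf_eq] at ht
      obtain ⟨htm, hts⟩ := ht
      have hcs : s.card = m + 1 := ((X.mem_faces').1 hs).1
      have hct : t.card = m := ((X.mem_faces').1 htm).1
      have hcard : (s \ t).card = 1 := by
        rw [Finset.card_sdiff_of_subset hts, hcs, hct]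
        omega
      obtain ⟨x, hx⟩ := Finset.card_eq_one.1 hcard
      have hxs : x ∈ s := by
        have : x ∈ s \ t := hx ▸ Finset.mem_singleton_self x
        exact (Finset.mem_sdiff.1 this).1
      refine ⟨x, hxs, ?_⟩
      show s.erase x = t
      rw [Finset.erase_eq, ← hx, Finset.sdiff_sdiff_self_left,
        Finset.inter_eq_right.2 hts]
    · intro x hx; rfl
  calc ∑ s ∈ X.faces (m + 1), ∑ x ∈ s, F (s.erase x) s
      = ∑ s ∈ X.faces (m + 1), ∑ t ∈ (X.faces m).filter (fun t => t ⊆ s), F t s :=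
        Finset.sum_congr rfl h1
    _ = ∑ s ∈ X.faces (m + 1), ∑ t ∈ X.faces m, if t ⊆ s then F t s else 0 := by
        simp [Finset.sum_filter]
    _ = ∑ t ∈ X.faces m, ∑ s ∈ X.faces (m + 1), if t ⊆ s then F t s else 0 :=
        Finset.sum_comm
    _ = ∑ t ∈ X.faces m, ∑ s ∈ (X.faces (m + 1)).filter (fun s => t ⊆ s), F t s := by
        simp [Finset.sum_filter]

/-- Summing `dist (m+1)` over the cofaces of `t` gives `(m+1) · dist m t`. -/
lemma coface_sum {m : ℕ} (hm : m + 1 ≤ d + 1) {t : Finset V} (ht : t ∈ X.faces m) :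
    ∑ s ∈ (X.faces (m + 1)).filter (fun s => t ⊆ s), X.dist (m + 1) s
      = ((m : ℝ) + 1) * X.dist m t := by
  obtain ⟨hct, S₀, hS₀, htS₀⟩ := (X.mem_faces').1 ht
  have hcount : ∀ S ∈ X.top, t ⊆ S →
      ((X.faces (m + 1)).filter (fun s => t ⊆ s ∧ s ⊆ S)).card = d + 1 - m := by
    intro S hS htS
    have hcS : S.card = d + 1 := X.pure S hS
    have himg : (X.faces (m + 1)).filter (fun s => t ⊆ s ∧ s ⊆ S)
        = (S \ t).image (fun x => insert x t) := by
      ext s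
      simp only [Finset.mem_filter, Finset.mem_image, Finset.mem_sdiff]
      constructor
      · rintro ⟨hsf, hts, hsS⟩
        have hcs : s.card = m + 1 := ((X.mem_faces').1 hsf).1
        have hcard : (s \ t).card = 1 := by
          rw [Finset.card_sdiff_of_subset hts, hcs, hct]
          omega
        obtain ⟨x, hx⟩ := Finset.card_eq_one.1 hcard
        have hxst : x ∈ s \ t := hx ▸ Finset.mem_singleton_self x
        rw [Finset.mem_sdiff] at hxst
        refine ⟨x, ⟨hsS hxst.1, hxst.2⟩, ?_⟩
        rw [Finset.insert_eq, Finset.union_comm, ← hx, Finset.union_sdiff_of_subset hts]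
      · rintro ⟨x, ⟨hxS, hxt⟩, rfl⟩
        refine ⟨?_, Finset.subset_insert x t, Finset.insert_subset hxS htS⟩
        rw [X.mem_faces']
        exact ⟨by rw [Finset.card_insert_of_notMem hxt, hct], S, hS,
          Finset.insert_subset hxS htS⟩
    rw [himg, Finset.card_image_of_injOn, Finset.card_sdiff_of_subset htS, hcS, hct]
    intro x hx y hy h
    rw [Finset.mem_coe, Finset.mem_sdiff] at hx hy
    have h2 : insert x t = insert y t := h
    have : x ∈ insert y t := by rw [← h2]; exact Finset.mem_insert_self x t
    rcases Finset.mem_insert.1 this with h' | h'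
    · exact h'
    · exact absurd h' hx.2
  have hswap : ∑ s ∈ (X.faces (m + 1)).filter (fun s => t ⊆ s),
      (∑ S ∈ X.top.filter (fun S => s ⊆ S), X.w S)
      = ∑ S ∈ X.top, X.w S *
          (((X.faces (m + 1)).filter (fun s => t ⊆ s ∧ s ⊆ S)).card : ℝ) := by
    calc ∑ s ∈ (X.faces (m + 1)).filter (fun s => t ⊆ s),
        (∑ S ∈ X.top.filter (fun S => s ⊆ S), X.w S)
        = ∑ s ∈ (X.faces (m + 1)).filter (fun s => t ⊆ s),
            ∑ S ∈ X.top, if s ⊆ S then X.w S else 0 := by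
          simp [Finset.sum_filter]
      _ = ∑ S ∈ X.top, ∑ s ∈ (X.faces (m + 1)).filter (fun s => t ⊆ s),
            (if s ⊆ S then X.w S else 0) := Finset.sum_comm
      _ = _ := by
          refine Finset.sum_congr rfl fun S _ => ?_
          rw [← Finset.sum_filter, Finset.filter_filter, Finset.sum_const,
            nsmul_eq_mul, mul_comm]
  have hc1 : (0:ℝ) < ((d + 1).choose (m + 1) : ℝ) := by
    exact_mod_cast Nat.choose_pos hm
  have hc0 : (0:ℝ) < ((d + 1).choose m : ℝ) := by
    exact_mod_cast Nat.choose_pos (le_trans (Nat.le_succ m) hm)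
  have hid : ((d + 1).choose (m + 1) : ℝ) * ((m : ℝ) + 1)
      = ((d + 1).choose m : ℝ) * ((d + 1 - m : ℕ) : ℝ) := by
    exact_mod_cast Nat.choose_succ_right_eq (d + 1) m
  have hterm : ∀ S ∈ X.top,
      X.w S * (((X.faces (m + 1)).filter (fun s => t ⊆ s ∧ s ⊆ S)).card : ℝ)
        = (if t ⊆ S then X.w S * ((d + 1 - m : ℕ) : ℝ) else 0) := by
    intro S hS
    by_cases h : t ⊆ S
    · rw [if_pos h, hcount S hS h]
    · rw [if_neg h]
      have he : (X.faces (m + 1)).filter (fun s => t ⊆ s ∧ s ⊆ S) = ∅ := by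
        refine Finset.filter_eq_empty_iff.2 fun {s} hs hc => h (hc.1.trans hc.2)
      simp [he]
  have hdiv : ((d + 1 - m : ℕ) : ℝ) / ((d + 1).choose (m + 1) : ℝ)
      = ((m : ℝ) + 1) / ((d + 1).choose m : ℝ) := by
    rw [div_eq_div_iff hc1.ne' hc0.ne']
    linear_combination -hid
  unfold dist
  rw [← Finset.sum_div, hswap, Finset.sum_congr rfl hterm, ← Finset.sum_filter,
    ← Finset.sum_mul, mul_div_assoc, hdiv]
  ring

lemma up_split {m : ℕ} {t s : Finset V} (hs : s ∈ X.faces (m + 1)) (ht : t ∈ X.faces m)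
    (hts : t ⊆ s) (f : Finset V → ℝ) :
    ∑ x ∈ s, f (s.erase x) = f t + ∑ x ∈ t, f (s.erase x) := by
  have hcs : s.card = m + 1 := ((X.mem_faces').1 hs).1
  have hct : t.card = m := ((X.mem_faces').1 ht).1
  have hcard : (s \ t).card = 1 := by rw [Finset.card_sdiff_of_subset hts, hcs, hct]; omega
  obtain ⟨y, hy⟩ := Finset.card_eq_one.1 hcard
  have herase : s.erase y = t := by
    rw [Finset.erase_eq, ← hy, Finset.sdiff_sdiff_self_left, Finset.inter_eq_right.2 hts]
  calc ∑ x ∈ s, f (s.erase x)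
      = ∑ x ∈ s \ t, f (s.erase x) + ∑ x ∈ t, f (s.erase x) :=
        (Finset.sum_sdiff hts).symm
    _ = f t + ∑ x ∈ t, f (s.erase x) := by rw [hy, Finset.sum_singleton, herase]

/-- The key identity `⟨Uf, Uf⟩ = ⟨f, f⟩/(j+2) + (j+1)/(j+2)·⟨f, M⁺f⟩`. -/
lemma up_ip (j : ℕ) (hj : j + 1 ≤ d) (f : Finset V → ℝ) :
    X.ip (j + 2) (X.up (j + 1) f) (X.up (j + 1) f)
      = (1 / ((j : ℝ) + 2)) * X.ip (j + 1) f f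
        + (((j : ℝ) + 1) / ((j : ℝ) + 2)) * X.ip (j + 1) f (X.Mplus (j + 1) f) := by
  have hj2 : ((j : ℝ) + 2) ≠ 0 := by positivity
  have hj1 : ((j : ℝ) + 1) ≠ 0 := by positivity
  have hUs : ∀ s, X.up (j + 1) f s = (∑ x ∈ s, f (s.erase x)) / ((j : ℝ) + 2) := by
    intro s; simp only [up]; push_cast; ring_nf
  have hex := X.exchange (m := j + 1) (fun a b => X.dist (j + 2) b * f a * X.up (j + 1) f b)
  have h1 : X.ip (j + 2) (X.up (j + 1) f) (X.up (j + 1) f)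
      = (1 / ((j : ℝ) + 2)) * ∑ s ∈ X.faces (j + 1 + 1), ∑ x ∈ s,
          X.dist (j + 2) s * f (s.erase x) * X.up (j + 1) f s := by
    rw [Finset.mul_sum]
    refine Finset.sum_congr rfl fun s hs => ?_
    rw [Finset.mul_sum, hUs s]
    have : ∑ x ∈ s, (1 / ((j : ℝ) + 2))
          * (X.dist (j + 2) s * f (s.erase x) * ((∑ y ∈ s, f (s.erase y)) / ((j : ℝ) + 2)))
        = (∑ x ∈ s, f (s.erase x)) * ((1 / ((j : ℝ) + 2))
            * (X.dist (j + 2) s * ((∑ y ∈ s, f (s.erase y)) / ((j : ℝ) + 2)))) := by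
      rw [Finset.sum_mul]
      exact Finset.sum_congr rfl fun x _ => by ring
    rw [this]
    ring
  rw [h1, hex]
  have h2 : ∀ t ∈ X.faces (j + 1),
      ∑ s ∈ (X.faces (j + 1 + 1)).filter (fun s => t ⊆ s),
          X.dist (j + 2) s * f t * X.up (j + 1) f s
        = X.dist (j + 1) t * f t * f t
            + ((j : ℝ) + 1) * (X.dist (j + 1) t * f t * X.Mplus (j + 1) f t) := by
    intro t ht
    have hdt : X.dist (j + 1) t ≠ 0 := (X.dist_pos ht).ne'
    have hsplit : ∀ s ∈ (X.faces (j + 1 + 1)).filter (fun s => t ⊆ s),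
        X.dist (j + 2) s * f t * X.up (j + 1) f s
          = (f t * f t / ((j : ℝ) + 2)) * X.dist (j + 2) s
            + (f t / ((j : ℝ) + 2)) * (X.dist (j + 2) s * ∑ x ∈ t, f (s.erase x)) := by
      intro s hs
      rw [Finset.mem_filter] at hs
      rw [hUs s, X.up_split hs.1 ht hs.2 f]
      ring
    rw [Finset.sum_congr rfl hsplit, Finset.sum_add_distrib, ← Finset.mul_sum,
      ← Finset.mul_sum]
    rw [X.coface_sum (by omega) ht]
    have hM : ∑ s ∈ (X.faces (j + 1 + 1)).filter (fun s => t ⊆ s),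
        X.dist (j + 2) s * ∑ x ∈ t, f (s.erase x)
          = (((j : ℝ) + 2) * ((j : ℝ) + 1)) * (X.dist (j + 1) t * X.Mplus (j + 1) f t) := by
      simp only [Mplus]
      rw [Finset.mul_sum, Finset.mul_sum]
      refine Finset.sum_congr rfl fun s hs => ?_
      push_cast
      field_simp
      ring
    rw [hM]
    field_simp
    push_cast
    ring
  rw [Finset.sum_congr rfl h2, Finset.sum_add_distrib]
  simp only [ip, Finset.mul_sum, mul_add, Finset.sum_add_distrib]
  congr 1
  exact Finset.sum_congr rfl fun t _ => by ring

/-- `⟨f, U D f⟩ = ‖D f‖² ≥ 0`. -/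
lemma lower_nonneg (j : ℕ) (f : Finset V → ℝ) :
    0 ≤ X.ip (j + 1) f (X.lower (j + 1) f) := by
  have hj1 : ((j : ℝ) + 1) ≠ 0 := by positivity
  have hex := X.exchange (m := j) (fun a b => X.dist (j + 1) b * f b * X.down (j + 1) f a)
  have h1 : X.ip (j + 1) f (X.lower (j + 1) f)
      = (1 / ((j : ℝ) + 1)) * ∑ t ∈ X.faces (j + 1), ∑ x ∈ t,
          X.dist (j + 1) t * f t * X.down (j + 1) f (t.erase x) := by
    simp only [ip, lower, up, Nat.add_sub_cancel]
    rw [Finset.mul_sum]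
    refine Finset.sum_congr rfl fun t ht => ?_
    rw [Finset.sum_div, Finset.mul_sum, Finset.mul_sum]
    refine Finset.sum_congr rfl fun x hx => ?_
    ring
  rw [h1, hex]
  have h2 : ∀ r ∈ X.faces j,
      ∑ t ∈ (X.faces (j + 1)).filter (fun t => r ⊆ t),
          X.dist (j + 1) t * f t * X.down (j + 1) f r
        = ((j : ℝ) + 1) * (X.dist j r * (X.down (j + 1) f r) ^ 2) := by
    intro r hr
    have hdr : X.dist j r ≠ 0 := (X.dist_pos hr).ne'
    have hD : X.down (j + 1) f r
        = (∑ t ∈ (X.faces (j + 1)).filter (fun t => r ⊆ t), X.dist (j + 1) t * f t)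
            / (((j : ℝ) + 1) * X.dist j r) := by
      simp only [down, Nat.add_sub_cancel]
      push_cast
      ring_nf
    rw [← Finset.sum_mul, hD]
    field_simp
  rw [Finset.sum_congr rfl h2, ← Finset.mul_sum]
  have hnn : (0:ℝ) ≤ ∑ r ∈ X.faces j, X.dist j r * (X.down (j + 1) f r) ^ 2 :=
    Finset.sum_nonneg fun r _ => mul_nonneg (X.dist_nonneg' j r) (sq_nonneg _)
  have hj1' : (0:ℝ) ≤ 1 / ((j : ℝ) + 1) := by positivity
  exact mul_nonneg hj1' (mul_nonneg (by positivity) hnn)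

lemma ip_sub (j : ℕ) (f a b : Finset V → ℝ) :
    X.ip j f (fun t => a t - b t) = X.ip j f a - X.ip j f b := by
  simp only [ip, ← Finset.sum_sub_distrib]
  refine Finset.sum_congr rfl fun t _ => by ring

/-- Cauchy–Schwarz-type lower bound for the inner product against a short vector. -/
lemma ip_lower_bound (j : ℕ) (f h : Finset V → ℝ) (γ : ℝ) (hγ : 0 ≤ γ)
    (hh : X.ip j h h ≤ γ ^ 2 * X.ip j f f) :
    -(γ * X.ip j f f) ≤ X.ip j f h := by
  have hcs : -X.ip j f h ≤ Real.sqrt (X.ip j f f) * Real.sqrt (X.ip j h h) := by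
    have h1 : -X.ip j f h = ∑ t ∈ X.faces j,
        (Real.sqrt (X.dist j t) * f t) * (Real.sqrt (X.dist j t) * (-h t)) := by
      simp only [ip]
      rw [← Finset.sum_neg_distrib]
      refine Finset.sum_congr rfl fun t _ => ?_
      have := Real.mul_self_sqrt (X.dist_nonneg' j t)
      linear_combination f t * h t * this
    have h2 : ∑ t ∈ X.faces j, (Real.sqrt (X.dist j t) * f t) ^ 2 = X.ip j f f := by
      simp only [ip]
      refine Finset.sum_congr rfl fun t _ => ?_
      have := Real.mul_self_sqrt (X.dist_nonneg' j t)
      linear_combination f t * f t * this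
    have h3 : ∑ t ∈ X.faces j, (Real.sqrt (X.dist j t) * (-h t)) ^ 2 = X.ip j h h := by
      simp only [ip]
      refine Finset.sum_congr rfl fun t _ => ?_
      have := Real.mul_self_sqrt (X.dist_nonneg' j t)
      linear_combination h t * h t * this
    calc -X.ip j f h
        = ∑ t ∈ X.faces j,
            (Real.sqrt (X.dist j t) * f t) * (Real.sqrt (X.dist j t) * (-h t)) := h1
      _ ≤ Real.sqrt (∑ t ∈ X.faces j, (Real.sqrt (X.dist j t) * f t) ^ 2)
            * Real.sqrt (∑ t ∈ X.faces j, (Real.sqrt (X.dist j t) * (-h t)) ^ 2) :=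
          Real.sum_mul_le_sqrt_mul_sqrt _ _ _
      _ = Real.sqrt (X.ip j f f) * Real.sqrt (X.ip j h h) := by rw [h2, h3]
  have hsq : Real.sqrt (X.ip j h h) ≤ γ * Real.sqrt (X.ip j f f) := by
    calc Real.sqrt (X.ip j h h) ≤ Real.sqrt (γ ^ 2 * X.ip j f f) :=
          Real.sqrt_le_sqrt hh
      _ = γ * Real.sqrt (X.ip j f f) := by
          rw [Real.sqrt_mul (sq_nonneg γ), Real.sqrt_sq hγ]
  have hff : (0:ℝ) ≤ Real.sqrt (X.ip j f f) := Real.sqrt_nonneg _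
  have : -X.ip j f h ≤ Real.sqrt (X.ip j f f) * (γ * Real.sqrt (X.ip j f f)) :=
    le_trans hcs (mul_le_mul_of_nonneg_left hsq hff)
  have hs : Real.sqrt (X.ip j f f) * Real.sqrt (X.ip j f f) = X.ip j f f :=
    Real.mul_self_sqrt (X.ip_self_nonneg j f)
  nlinarith [this, hs]

end WSC

/-- A `k`-dimensional `γ`-HDX with `γ < 1/(k+1)` is proper:
for all `j ≤ k-1` and all `f ∈ C^j`,
`⟨U_j f, U_j f⟩ ≥ (1/(j+2) − ((j+1)/(j+2))γ)⟨f,f⟩`, which is positive for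
nonzero `f`; in particular `ker U_j = 0`. -/
theorem hdx_proper {V : Type} [DecidableEq V] [Fintype V] {k : ℕ}
    (X : WSC V k) (γ : ℝ) (hγ0 : 0 ≤ γ) (hγ : γ < 1 / ((k : ℝ) + 1))
    (hX : X.IsHDX γ) (j : ℕ) (hj : j + 1 ≤ k) (f : Finset V → ℝ) :
    (1 / ((j : ℝ) + 2) - (((j : ℝ) + 1) / ((j : ℝ) + 2)) * γ) * X.ip (j + 1) f f
      ≤ X.ip (j + 2) (X.up (j + 1) f) (X.up (j + 1) f) ∧
    ((∃ t ∈ X.faces (j + 1), f t ≠ 0) →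
      0 < X.ip (j + 2) (X.up (j + 1) f) (X.up (j + 1) f)) ∧
    ((∀ s ∈ X.faces (j + 2), X.up (j + 1) f s = 0) →
      ∀ t ∈ X.faces (j + 1), f t = 0) := by
  set A := X.ip (j + 1) f f with hA
  set M := X.ip (j + 1) f (X.Mplus (j + 1) f) with hM
  -- the identity
  have hid := X.up_ip j hj f
  -- the lower bound on ⟨f, M⁺ f⟩
  have hbound : -(γ * A) ≤ M := by
    have h1 : -(γ * A) ≤ X.ip (j + 1) f
        (fun t => X.Mplus (j + 1) f t - X.lower (j + 1) f t) :=
      X.ip_lower_bound (j + 1) f _ γ hγ0 (hX j hj f)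
    rw [X.ip_sub] at h1
    have h2 := X.lower_nonneg j f
    simp only [← hA, ← hM] at h1 h2 ⊢
    linarith
  have hcoef : 0 < 1 / ((j : ℝ) + 2) - (((j : ℝ) + 1) / ((j : ℝ) + 2)) * γ := by
    have hk1 : (0:ℝ) < (k : ℝ) + 1 := by positivity
    have hγk : γ * ((k : ℝ) + 1) < 1 := by
      have := (lt_div_iff₀ hk1).1 hγ
      linarith [this]
    have hjk : ((j : ℝ) + 1) ≤ (k : ℝ) + 1 := by
      have : ((j : ℝ) + 1) ≤ (k : ℝ) := by exact_mod_cast hj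
      linarith
    have h1 : ((j : ℝ) + 1) * γ < 1 := by
      calc ((j : ℝ) + 1) * γ ≤ ((k : ℝ) + 1) * γ :=
            mul_le_mul_of_nonneg_right hjk hγ0
        _ = γ * ((k : ℝ) + 1) := by ring
        _ < 1 := hγk
    rw [div_mul_eq_mul_div, ← sub_div]
    apply div_pos (by linarith) (by positivity)
  have hAnn : 0 ≤ A := X.ip_self_nonneg (j + 1) f
  have hfrac : (0:ℝ) ≤ ((j : ℝ) + 1) / ((j : ℝ) + 2) := by positivity
  have key : (1 / ((j : ℝ) + 2) - (((j : ℝ) + 1) / ((j : ℝ) + 2)) * γ) * A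
      ≤ X.ip (j + 2) (X.up (j + 1) f) (X.up (j + 1) f) := by
    rw [hid, ← hA, ← hM]
    have h2 : 0 ≤ (((j : ℝ) + 1) / ((j : ℝ) + 2)) * (M + γ * A) :=
      mul_nonneg hfrac (by linarith)
    nlinarith [h2]
  refine ⟨key, ?_, ?_⟩
  · rintro ⟨t, ht, hft⟩
    have hApos : 0 < A := X.ip_self_pos ht hft
    calc (0:ℝ) < (1 / ((j : ℝ) + 2) - (((j : ℝ) + 1) / ((j : ℝ) + 2)) * γ) * A :=
          mul_pos hcoef hApos
      _ ≤ _ := key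
  · intro hz t ht
    by_contra hft
    have hApos : 0 < A := X.ip_self_pos ht hft
    have hzero : X.ip (j + 2) (X.up (j + 1) f) (X.up (j + 1) f) = 0 :=
      Finset.sum_eq_zero fun s hs => by rw [hz s hs]; ring
    have := mul_pos hcoef hApos
    rw [hzero] at key
    linarith
end
end
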